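/- arXiv:1501.05077 — 6 statements merged into one kernel-verified Lean document; each statement's English description precedes it below -/
import Mathlib

section
/- Let G be a finite group with identity e, and let H be a subgroup of G such that G equals the union over all g in G of the conjugates g⁻¹Hg. Then H = G. -/
/-! Let `G` act on the cosets `G ⧸ H`. An element `x` fixes the coset `g⁻¹H` exactly when
`g x g⁻¹ ∈ H`, so the hypothesis says that every element of `G` has a fixed point. By Burnside's
lemma the average number of fixed points of a transitive action is `1`; since the identity fixes all
`[G : H]` cosets, some element fixes none unless `[G : H] = 1`. -/

namespace MulAction

theorem exists_forall_smul_ne {G X : Type*} [Group G] [MulAction G X] [Finite G] [Finite X]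
    [IsPretransitive G X] [Nontrivial X] : ∃ g : G, ∀ x : X, g • x ≠ x := by
  classical
  cases nonempty_fintype G
  cases nonempty_fintype X
  by_contra! hfix
  have hpos (g : G) : 1 ≤ Fintype.card (fixedBy X g) :=
    let ⟨x, hx⟩ := hfix g
    Fintype.card_pos_iff.mpr ⟨⟨x, hx⟩⟩
  have hone : 1 < Fintype.card (fixedBy X (1 : G)) := by
    simpa [fixedBy] using Fintype.one_lt_card (α := X)
  have : Unique (orbitRel.Quotient G X) :=
    ((pretransitive_iff_unique_quotient_of_nonempty G X).mp inferInstance).some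
  have hburnside : ∑ g : G, Fintype.card (fixedBy X g) = Fintype.card G := by
    rw [sum_card_fixedBy_eq_card_orbits_mul_card_group, Fintype.card_unique, one_mul]
  have hlt : Fintype.card G < ∑ g : G, Fintype.card (fixedBy X g) :=
    calc Fintype.card G = ∑ _g : G, 1 := by simp
      _ < _ := Finset.sum_lt_sum (fun g _ => hpos g) ⟨1, Finset.mem_univ _, hone⟩
  exact hlt.ne' hburnside

end MulAction

theorem QuotientGroup.smul_mk_eq_self_iff {G : Type*} [Group G] {H : Subgroup G} (g k : G) :
    g • (k : G ⧸ H) = k ↔ k⁻¹ * g * k ∈ H := by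
  rw [MulAction.Quotient.smul_mk, eq_comm, QuotientGroup.eq, smul_eq_mul, mul_assoc]

/-- **Jordan's theorem.** If `G` is a finite group and `H` a subgroup such that `G` is
the union of the conjugates `g⁻¹ H g` of `H`, then `H = G`. -/
theorem jordan_subgroup_eq_top {G : Type*} [Group G] [Finite G] (H : Subgroup G)
    (h : ∀ x : G, ∃ g : G, g * x * g⁻¹ ∈ H) : H = ⊤ := by
  by_contra hH
  have : Nontrivial (G ⧸ H) := QuotientGroup.nontrivial_iff.mpr hH
  obtain ⟨x, hx⟩ := MulAction.exists_forall_smul_ne (G := G) (X := G ⧸ H)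
  obtain ⟨g, hg⟩ := h x
  exact hx (g⁻¹ : G) ((QuotientGroup.smul_mk_eq_self_iff x g⁻¹).mpr (by simpa using hg))
end

section
/- Let G be a compact group with normalized Haar measure λ_G, and let H be a closed subgroup with Haar probability measure λ_H. If the integral over g ∈ G (with respect to Haar measure) of the pushforward of λ_H under conjugation by g equals λ_G, then H = G. -/
open MeasureTheory

lemma jordan_aux_integrable {X : Type*} [TopologicalSpace X] [CompactSpace X]
    [MeasurableSpace X] [OpensMeasurableSpace X]
    (μ : Measure X) [IsFiniteMeasure μ] {f : X → ℝ} (hf : Continuous f) : Integrable f μ :=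
  hf.integrable_of_hasCompactSupport (isClosed_tsupport f).isCompact

lemma jordan_aux_cont {X Y : Type*} [TopologicalSpace X] [TopologicalSpace Y] [CompactSpace Y]
    [MeasurableSpace Y] [OpensMeasurableSpace Y]
    (ν : Measure Y) [IsFiniteMeasure ν] {k : X × Y → ℝ} (hk : Continuous k) :
    Continuous fun x => ∫ y, k (x, y) ∂ν := by
  have lip : LipschitzWith (ν Set.univ).toNNReal (fun u : C(Y, ℝ) => ∫ y, u y ∂ν) := by
    refine LipschitzWith.of_dist_le_mul fun u v => ?_
    rw [dist_eq_norm]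
    have h1 : Integrable (fun y => u y) ν := jordan_aux_integrable ν u.continuous
    have h2 : Integrable (fun y => v y) ν := jordan_aux_integrable ν v.continuous
    rw [← integral_sub h1 h2]
    have hb : ∀ y, ‖u y - v y‖ ≤ dist u v := fun y => by
      rw [← dist_eq_norm]; exact ContinuousMap.dist_apply_le_dist y
    calc ‖∫ y, (u y - v y) ∂ν‖ ≤ dist u v * (ν Set.univ).toReal :=
          norm_integral_le_of_norm_le_const (Filter.Eventually.of_forall hb)
      _ = (ν Set.univ).toNNReal * dist u v := by
          rw [mul_comm]; rfl
  have heq : (fun x => ∫ y, k (x, y) ∂ν)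
      = (fun u : C(Y, ℝ) => ∫ y, u y ∂ν) ∘ fun x => (ContinuousMap.curry ⟨k, hk⟩) x := rfl
  rw [heq]
  exact lip.continuous.comp (ContinuousMap.curry ⟨k, hk⟩).continuous

lemma jordan_aux_ker {G : Type*} [Group G] [TopologicalSpace G] [IsTopologicalGroup G]
    [CompactSpace G] [MeasurableSpace G] [BorelSpace G]
    (H : Subgroup G) (hH : IsClosed (H : Set G))
    (lH : Measure H) [IsProbabilityMeasure lH] [lH.InnerRegular] :
    Measurable (fun g : G => lH.map (fun x : H => g⁻¹ * (x : G) * g)) := by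
  haveI : CompactSpace H := isCompact_iff_compactSpace.mp hH.isCompact
  haveI : BorelSpace H := Subtype.borelSpace (H : Set G)
  have hc : ∀ g : G, Continuous (fun x : H => g⁻¹ * (x : G) * g) := by
    intro g; fun_prop
  apply Measure.measurable_of_measurable_coe
  intro s hs
  have hrw : (fun g : G => lH.map (fun x : H => g⁻¹ * (x : G) * g) s)
      = fun g : G => lH ((fun x : H => g⁻¹ * (x : G) * g) ⁻¹' s) := by
    funext g; exact Measure.map_apply (hc g).measurable hs
  rw [hrw]
  have main : ∀ s : Set G, MeasurableSet s →
      Measurable (fun g : G => lH ((fun x : H => g⁻¹ * (x : G) * g) ⁻¹' s)) := by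
    have hBorel : (inferInstance : MeasurableSpace G)
        = MeasurableSpace.generateFrom {s : Set G | IsOpen s} := BorelSpace.measurable_eq
    refine MeasurableSpace.induction_on_inter hBorel isPiSystem_isOpen ?_ ?_ ?_ ?_
    · simp
    · intro t ht
      have hlsc : LowerSemicontinuous
          (fun g : G => lH ((fun x : H => g⁻¹ * (x : G) * g) ⁻¹' t)) := by
        intro g r hr
        have hUmeas : MeasurableSet ((fun x : H => g⁻¹ * (x : G) * g) ⁻¹' t) :=
          (ht.preimage (hc g)).measurableSet
        obtain ⟨K, hKsub, hKcomp, hKr⟩ :=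
          (Measure.InnerRegular.innerRegular (μ := lH)) hUmeas r hr
        have hO : IsOpen {p : G × H | p.1⁻¹ * (p.2 : G) * p.1 ∈ t} := by
          refine ht.preimage ?_; fun_prop
        have hsub : ({g} : Set G) ×ˢ K ⊆ {p : G × H | p.1⁻¹ * (p.2 : G) * p.1 ∈ t} := by
          rintro ⟨g', x⟩ ⟨hg', hx⟩
          rcases hg' with rfl
          exact hKsub hx
        obtain ⟨V, W, hVo, hWo, hgV, hKW, hVW⟩ :=
          generalized_tube_lemma isCompact_singleton hKcomp hO hsub
        have hV : V ∈ nhds g := hVo.mem_nhds (hgV rfl)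
        refine Filter.eventually_of_mem hV fun g' hg' => ?_
        refine lt_of_lt_of_le hKr (measure_mono ?_)
        intro x hx
        exact hVW (Set.mk_mem_prod hg' (hKW hx))
      exact hlsc.measurable
    · intro t htmeas hrec
      have hcompl : ∀ g : G, lH ((fun x : H => g⁻¹ * (x : G) * g) ⁻¹' tᶜ)
          = 1 - lH ((fun x : H => g⁻¹ * (x : G) * g) ⁻¹' t) := by
        intro g
        rw [Set.preimage_compl, measure_compl ((hc g).measurable htmeas) (measure_ne_top _ _)]
        simp
      simp only [hcompl]
      exact Measurable.const_sub hrec 1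
    · intro u hdisj humeas hrec
      have hun : ∀ g : G, lH ((fun x : H => g⁻¹ * (x : G) * g) ⁻¹' ⋃ i, u i)
          = ∑' i, lH ((fun x : H => g⁻¹ * (x : G) * g) ⁻¹' u i) := by
        intro g
        rw [Set.preimage_iUnion]
        exact measure_iUnion (fun i j hij => (hdisj hij).preimage _)
          (fun i => (hc g).measurable (humeas i))
      simp only [hun]
      exact Measurable.ennreal_tsum hrec
  exact main s hs

/-- **Jordan's theorem for compact groups.** Let `G` be a compact group with normalized Haar
measure `λG` and `H` a closed subgroup with Haar probability measure `λH`.  If the average over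
`g ∈ G` (w.r.t. Haar measure) of the pushforwards of `λH` under conjugation by `g` is the Haar
measure of `G`, then `H = G`. -/
theorem jordan_compact_group {G : Type*} [Group G] [TopologicalSpace G] [IsTopologicalGroup G]
    [CompactSpace G] [MeasurableSpace G] [BorelSpace G]
    (lG : Measure G) [lG.IsHaarMeasure] [IsProbabilityMeasure lG]
    (H : Subgroup G) (hH : IsClosed (H : Set G))
    (lH : Measure H) [lH.IsMulLeftInvariant] [IsProbabilityMeasure lH]
    (havg : lG.bind (fun g => lH.map (fun x : H => g⁻¹ * (x : G) * g)) = lG) :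
    H = ⊤ := by
  -- basic instances
  haveI : CompactSpace H := isCompact_iff_compactSpace.mp hH.isCompact
  haveI : BorelSpace H := Subtype.borelSpace (H : Set G)
  haveI : LocallyCompactSpace G :=
    IsCompact.locallyCompactSpace_of_mem_nhds_of_group isCompact_univ (x := 1) Filter.univ_mem
  haveI : lH.IsHaarMeasure := by
    refine Measure.isHaarMeasure_of_isCompact_nonempty_interior lH Set.univ isCompact_univ ?_ ?_ ?_
    · exact ⟨1, by simp⟩
    · simp
    · simp
  haveI : lH.InnerRegular := by infer_instance
  haveI : lG.IsMulRightInvariant := by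
    constructor
    intro g
    haveI : IsProbabilityMeasure (Measure.map (· * g) lG) :=
      Measure.isProbabilityMeasure_map (measurable_mul_const g).aemeasurable
    exact Measure.isHaarMeasure_eq_of_isProbabilityMeasure (Measure.map (· * g) lG) lG
  -- suppose H ≠ ⊤
  by_contra hne
  obtain ⟨a, haH⟩ : ∃ a : G, a ∉ H := by
    by_contra hcon
    push_neg at hcon
    exact hne ((Subgroup.eq_top_iff' H).mpr hcon)
  -- Urysohn separation of H from a • H
  have hclosed_t : IsClosed ((a * ·) '' (H : Set G)) :=
    (Homeomorph.mulLeft a).isClosedMap _ hH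
  have hdisj : Disjoint (H : Set G) ((a * ·) '' (H : Set G)) := by
    rw [Set.disjoint_left]
    rintro x hx ⟨h, hh, rfl⟩
    exact haH (by simpa using H.mul_mem hx (H.inv_mem hh))
  obtain ⟨φ, hφ0, hφ1, hφI⟩ :=
    exists_continuous_zero_one_of_isCompact hH.isCompact hclosed_t hdisj
  -- the averaged function f0 and its normalization f
  set f0 : G → ℝ := fun x => ∫ h : H, φ (x * (h : G)) ∂lH with hf0def
  have hf0cont : Continuous f0 :=
    jordan_aux_cont lH (k := fun p : G × H => φ (p.1 * (p.2 : G)))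
      (φ.continuous.comp (continuous_fst.mul (continuous_subtype_val.comp continuous_snd)))
  have hf0inv : ∀ (x : G) (k : H), f0 (x * (k : G)) = f0 x := by
    intro x k
    have h1 : ∀ h : H, φ ((x * (k : G)) * (h : G)) = (fun h : H => φ (x * (h : G))) (k * h) := by
      intro h; simp [mul_assoc]
    calc f0 (x * (k : G)) = ∫ h : H, (fun h : H => φ (x * (h : G))) (k * h) ∂lH := by
          simp only [hf0def]; exact integral_congr_ae (Filter.Eventually.of_forall h1)
      _ = f0 x := integral_mul_left_eq_self (μ := lH) (fun h : H => φ (x * (h : G))) k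
  have hf0_1 : f0 1 = 0 := by
    have hz : ∀ h : H, φ ((1 : G) * (h : G)) = 0 := by
      intro h; rw [one_mul]; exact hφ0 h.2
    simp only [hf0def]
    rw [integral_congr_ae (Filter.Eventually.of_forall hz)]; simp
  have hf0_a : f0 a = 1 := by
    have ho : ∀ h : H, φ (a * (h : G)) = 1 := fun h => hφ1 ⟨(h : G), h.2, rfl⟩
    simp only [hf0def]
    rw [integral_congr_ae (Filter.Eventually.of_forall ho)]; simp
  set c0 : ℝ := ∫ x, f0 x ∂lG with hc0def
  set f : G → ℝ := fun x => f0 x - c0 with hfdef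
  have hfc : Continuous f := hf0cont.sub continuous_const
  have hfinv : ∀ (x : G) (k : H), f (x * (k : G)) = f x := by
    intro x k; simp only [hfdef, hf0inv x k]
  have hfmean : ∫ x, f x ∂lG = 0 := by
    simp only [hfdef]
    rw [integral_sub (jordan_aux_integrable lG hf0cont) (integrable_const c0)]
    simp [hc0def]
  -- the key consequence of `havg`
  have hker := jordan_aux_ker H hH lH
  have key : ∀ w : G → ℝ, Continuous w → (∀ y, 0 ≤ w y) →
      ∫ y, w y ∂lG = ∫ g, (∫ h : H, w (g⁻¹ * (h : G) * g) ∂lH) ∂lG := by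
    intro w hw hwnn
    have hwm : Measurable w := hw.measurable
    have hinner_cont : Continuous fun g : G => ∫ h : H, w (g⁻¹ * (h : G) * g) ∂lH :=
      jordan_aux_cont lH (k := fun p : G × H => w (p.1⁻¹ * (p.2 : G) * p.1))
        (hw.comp (by fun_prop))
    have hinner_nn : ∀ g : G, 0 ≤ ∫ h : H, w (g⁻¹ * (h : G) * g) ∂lH :=
      fun g => integral_nonneg fun h => hwnn _
    have hlhs : ENNReal.ofReal (∫ y, w y ∂lG) = ∫⁻ y, ENNReal.ofReal (w y) ∂lG :=
      ofReal_integral_eq_lintegral_ofReal (jordan_aux_integrable lG hw)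
        (Filter.Eventually.of_forall hwnn)
    have hmeas2 : Measurable fun y : G => ENNReal.ofReal (w y) :=
      ENNReal.measurable_ofReal.comp hwm
    have hbind : ∫⁻ y, ENNReal.ofReal (w y) ∂lG
        = ∫⁻ g, ∫⁻ h : H, ENNReal.ofReal (w (g⁻¹ * (h : G) * g)) ∂lH ∂lG := by
      conv_lhs => rw [← havg]
      rw [Measure.lintegral_bind hker.aemeasurable hmeas2.aemeasurable]
      refine lintegral_congr fun g => ?_
      rw [lintegral_map hmeas2
        (by fun_prop : Measurable fun x : H => g⁻¹ * (x : G) * g)]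
    have hmid : ∀ g : G, ∫⁻ h : H, ENNReal.ofReal (w (g⁻¹ * (h : G) * g)) ∂lH
        = ENNReal.ofReal (∫ h : H, w (g⁻¹ * (h : G) * g) ∂lH) := fun g =>
      (ofReal_integral_eq_lintegral_ofReal
        (jordan_aux_integrable lH (hw.comp (by fun_prop)))
        (Filter.Eventually.of_forall fun h => hwnn _)).symm
    have hout : ∫⁻ g, ENNReal.ofReal (∫ h : H, w (g⁻¹ * (h : G) * g) ∂lH) ∂lG
        = ENNReal.ofReal (∫ g, (∫ h : H, w (g⁻¹ * (h : G) * g) ∂lH) ∂lG) :=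
      (ofReal_integral_eq_lintegral_ofReal (jordan_aux_integrable lG hinner_cont)
        (Filter.Eventually.of_forall hinner_nn)).symm
    have hchain := hlhs.trans (hbind.trans ((lintegral_congr hmid).trans hout))
    exact (ENNReal.ofReal_eq_ofReal_iff (integral_nonneg hwnn)
      (integral_nonneg hinner_nn)).mp hchain
  -- basic analytic quantities
  set A : ℝ := ∫ x, (f x)^2 ∂lG with hAdef
  set u : G → ℝ := fun y => ∫ x, f (x * y) * f x ∂lG with hudef
  have hucont : Continuous u :=
    jordan_aux_cont lG (k := fun p : G × G => f (p.2 * p.1) * f p.2)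
      ((hfc.comp (continuous_snd.mul continuous_fst)).mul (hfc.comp continuous_snd))
  set F : G → ℝ := fun y => ∫ x, (f (x * y) - f x)^2 ∂lG with hFdef
  have hFcont : Continuous F :=
    jordan_aux_cont lG (k := fun p : G × G => (f (p.2 * p.1) - f p.2)^2)
      (((hfc.comp (continuous_snd.mul continuous_fst)).sub (hfc.comp continuous_snd)).pow 2)
  have hFnn : ∀ y, 0 ≤ F y := fun y => integral_nonneg fun x => sq_nonneg _
  have hFy : ∀ y, F y = 2*A - 2*(u y) := by
    intro y
    have hptw : ∀ x : G, (f (x * y) - f x)^2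
        = ((f (x * y))^2 + (f x)^2) - 2*(f (x * y) * f x) := fun x => by ring
    have i1 : Integrable (fun x => (f (x * y))^2) lG :=
      jordan_aux_integrable lG ((hfc.comp (continuous_mul_right y)).pow 2)
    have i2 : Integrable (fun x => (f x)^2) lG := jordan_aux_integrable lG (hfc.pow 2)
    have i3 : Integrable (fun x => 2*(f (x * y) * f x)) lG :=
      ((jordan_aux_integrable lG ((hfc.comp (continuous_mul_right y)).mul hfc)).const_mul 2)
    calc F y = ∫ x, (((f (x * y))^2 + (f x)^2) - 2*(f (x * y) * f x)) ∂lG :=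
          integral_congr_ae (Filter.Eventually.of_forall hptw)
      _ = (∫ x, ((f (x * y))^2 + (f x)^2) ∂lG) - ∫ x, 2*(f (x * y) * f x) ∂lG :=
          integral_sub (i1.add i2) i3
      _ = ((∫ x, (f (x * y))^2 ∂lG) + ∫ x, (f x)^2 ∂lG) - 2 * ∫ x, f (x * y) * f x ∂lG := by
          rw [integral_add i1 i2, integral_const_mul]
      _ = 2*A - 2*(u y) := by
          rw [integral_mul_right_eq_self (μ := lG) (fun x => (f x)^2) y]
          simp only [hudef, hAdef]; ring
  have humean : ∫ y, u y ∂lG = 0 := by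
    have hsw := integral_integral_swap_of_hasCompactSupport
      (f := fun (y : G) (x : G) => f (x * y) * f x) (μ := lG) (ν := lG)
      ((hfc.comp (continuous_snd.mul continuous_fst)).mul (hfc.comp continuous_snd))
      (isClosed_tsupport _).isCompact
    have hzero : ∀ x : G, ∫ y, f (x * y) * f x ∂lG = 0 := by
      intro x
      rw [integral_mul_const]
      rw [integral_mul_left_eq_self (μ := lG) f x, hfmean, zero_mul]
    calc ∫ y, u y ∂lG = ∫ x, (∫ y, f (x * y) * f x ∂lG) ∂lG := hsw
      _ = 0 := by rw [integral_congr_ae (Filter.Eventually.of_forall hzero)]; simp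
  have hLHS : ∫ y, F y ∂lG = 2*A := by
    rw [integral_congr_ae (Filter.Eventually.of_forall hFy),
      integral_sub (integrable_const _) ((jordan_aux_integrable lG hucont).const_mul 2),
      show (∫ y, 2 * u y ∂lG) = 2 * ∫ y, u y ∂lG from integral_const_mul 2 u, humean]
    simp
  -- the projected function P and its square integral Φ
  set P : G → G → ℝ := fun g x => ∫ h : H, f (x * (h : G) * g) ∂lH with hPdef
  have hPcont : Continuous fun p : G × G => P p.1 p.2 :=
    jordan_aux_cont lH (k := fun q : (G × G) × H => f (q.1.2 * (q.2 : G) * q.1.1))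
      (hfc.comp (by fun_prop))
  have hPcont1 : ∀ g : G, Continuous fun x => P g x := by
    intro g
    exact (hPcont.comp (continuous_const.prodMk continuous_id : Continuous fun x : G => (g, x)))
  set Φ : G → ℝ := fun g => ∫ x, (P g x)^2 ∂lG with hPhidef
  have hΦcont : Continuous Φ :=
    jordan_aux_cont lG (k := fun q : G × G => (P q.1 q.2)^2) (hPcont.pow 2)
  -- the two transformation identities
  have hE : ∀ (g : G) (h : H),
      (∫ x, f (x * (h : G) * g) * P g x ∂lG) = ∫ x, f (x * g) * P g x ∂lG := by
    intro g h
    have hPsub : ∀ x : G, P g (x * ((h : G))⁻¹) = P g x := by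
      intro x
      have hls : ∫ h' : H, f (x * ((h : G))⁻¹ * ((h * h' : H) : G) * g) ∂lH
          = ∫ h' : H, f (x * ((h : G))⁻¹ * (h' : G) * g) ∂lH :=
        integral_mul_left_eq_self (μ := lH)
          (fun h' : H => f (x * ((h : G))⁻¹ * (h' : G) * g)) h
      have h2 : ∀ h' : H, x * ((h : G))⁻¹ * ((h * h' : H) : G) * g = x * (h' : G) * g := by
        intro h'
        push_cast
        simp [mul_assoc]
      calc P g (x * ((h : G))⁻¹)
          = ∫ h' : H, f (x * ((h : G))⁻¹ * ((h * h' : H) : G) * g) ∂lH := hls.symm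
        _ = ∫ h' : H, f (x * (h' : G) * g) ∂lH :=
            integral_congr_ae (Filter.Eventually.of_forall fun h' => congrArg f (h2 h'))
        _ = P g x := rfl
    have hsub : ∫ x, f (x * ((h : G))⁻¹ * (h : G) * g) * P g (x * ((h : G))⁻¹) ∂lG
        = ∫ x, f (x * (h : G) * g) * P g x ∂lG :=
      integral_mul_right_eq_self (μ := lG) (fun x => f (x * (h : G) * g) * P g x) ((h : G))⁻¹
    calc ∫ x, f (x * (h : G) * g) * P g x ∂lG
        = ∫ x, f (x * ((h : G))⁻¹ * (h : G) * g) * P g (x * ((h : G))⁻¹) ∂lG := hsub.symm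
      _ = ∫ x, f (x * g) * P g x ∂lG := by
          refine integral_congr_ae (Filter.Eventually.of_forall fun x => ?_)
          show f (x * ((h : G))⁻¹ * (h : G) * g) * P g (x * ((h : G))⁻¹) = f (x * g) * P g x
          rw [inv_mul_cancel_right, hPsub x]
  have hΦD : ∀ g : G, Φ g = ∫ x, f (x * g) * P g x ∂lG := by
    intro g
    have hptw : ∀ x : G, (P g x)^2 = ∫ h : H, f (x * (h : G) * g) * P g x ∂lH := by
      intro x
      calc (P g x)^2 = P g x * P g x := by rw [pow_two]
        _ = (∫ h : H, f (x * (h : G) * g) ∂lH) * P g x := rfl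
        _ = ∫ h : H, f (x * (h : G) * g) * P g x ∂lH := (integral_mul_const _ _).symm
    have hswap := integral_integral_swap_of_hasCompactSupport
      (f := fun (x : G) (h : H) => f (x * (h : G) * g) * P g x) (μ := lG) (ν := lH)
      ((hfc.comp (by fun_prop : Continuous fun p : G × H => p.1 * (p.2 : G) * g)).mul
        ((hPcont1 g).comp continuous_fst))
      (isClosed_tsupport _).isCompact
    calc Φ g = ∫ x, (∫ h : H, f (x * (h : G) * g) * P g x ∂lH) ∂lG :=
          integral_congr_ae (Filter.Eventually.of_forall hptw)
      _ = ∫ h : H, (∫ x, f (x * (h : G) * g) * P g x ∂lG) ∂lH := hswap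
      _ = ∫ _h : H, (∫ x, f (x * g) * P g x ∂lG) ∂lH :=
          integral_congr_ae (Filter.Eventually.of_forall fun h => hE g h)
      _ = ∫ x, f (x * g) * P g x ∂lG := by
          rw [integral_const]; simp
  have hCross : ∀ g : G, (∫ h : H, (∫ x, f (x * (h : G) * g) * f (x * g) ∂lG) ∂lH) = Φ g := by
    intro g
    have hswap := integral_integral_swap_of_hasCompactSupport
      (f := fun (h : H) (x : G) => f (x * (h : G) * g) * f (x * g)) (μ := lH) (ν := lG)
      ((hfc.comp (by fun_prop : Continuous fun p : H × G => p.2 * (p.1 : G) * g)).mul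
        (hfc.comp (by fun_prop : Continuous fun p : H × G => p.2 * g)))
      (isClosed_tsupport _).isCompact
    calc ∫ h : H, (∫ x, f (x * (h : G) * g) * f (x * g) ∂lG) ∂lH
        = ∫ x, (∫ h : H, f (x * (h : G) * g) * f (x * g) ∂lH) ∂lG := hswap
      _ = ∫ x, f (x * g) * P g x ∂lG := by
          refine integral_congr_ae (Filter.Eventually.of_forall fun x => ?_)
          show (∫ h : H, f (x * (h : G) * g) * f (x * g) ∂lH) = f (x * g) * P g x
          rw [integral_mul_const]
          exact mul_comm _ _
      _ = Φ g := (hΦD g).symm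
  -- rewriting the conjugated integrand
  have hFconj : ∀ (g : G) (h : H), F (g⁻¹ * (h : G) * g)
      = 2*A - 2 * ∫ x, f (x * (h : G) * g) * f (x * g) ∂lG := by
    intro g h
    have hsub : ∫ x, f ((x * g) * (g⁻¹ * (h : G) * g)) * f (x * g) ∂lG
        = ∫ x, f (x * (g⁻¹ * (h : G) * g)) * f x ∂lG :=
      integral_mul_right_eq_self (μ := lG) (fun x => f (x * (g⁻¹ * (h : G) * g)) * f x) g
    have h1 : ∀ x : G, (x * g) * (g⁻¹ * (h : G) * g) = x * (h : G) * g := by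
      intro x; simp [mul_assoc]
    have huc : u (g⁻¹ * (h : G) * g) = ∫ x, f (x * (h : G) * g) * f (x * g) ∂lG := by
      calc u (g⁻¹ * (h : G) * g)
          = ∫ x, f (x * (g⁻¹ * (h : G) * g)) * f x ∂lG := rfl
        _ = ∫ x, f ((x * g) * (g⁻¹ * (h : G) * g)) * f (x * g) ∂lG := hsub.symm
        _ = ∫ x, f (x * (h : G) * g) * f (x * g) ∂lG :=
            integral_congr_ae (Filter.Eventually.of_forall fun x =>
              congrArg (fun z => f z * f (x * g)) (h1 x))
    rw [hFy, huc]
  have hinner : ∀ g : G, ∫ h : H, F (g⁻¹ * (h : G) * g) ∂lH = 2*A - 2 * Φ g := by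
    intro g
    have hicont : Continuous fun h : H => ∫ x, f (x * (h : G) * g) * f (x * g) ∂lG :=
      jordan_aux_cont lG (k := fun p : H × G => f (p.2 * (p.1 : G) * g) * f (p.2 * g))
        ((hfc.comp (by fun_prop : Continuous fun p : H × G => p.2 * (p.1 : G) * g)).mul
          (hfc.comp (by fun_prop : Continuous fun p : H × G => p.2 * g)))
    calc ∫ h : H, F (g⁻¹ * (h : G) * g) ∂lH
        = ∫ h : H, (2*A - 2 * ∫ x, f (x * (h : G) * g) * f (x * g) ∂lG) ∂lH :=
          integral_congr_ae (Filter.Eventually.of_forall fun h => hFconj g h)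
      _ = (∫ _h : H, (2*A : ℝ) ∂lH)
            - ∫ h : H, 2 * ∫ x, f (x * (h : G) * g) * f (x * g) ∂lG ∂lH :=
          integral_sub (integrable_const _) ((jordan_aux_integrable lH hicont).const_mul 2)
      _ = 2*A - 2 * ∫ h : H, (∫ x, f (x * (h : G) * g) * f (x * g) ∂lG) ∂lH := by
          rw [show (∫ h : H, 2 * ∫ x, f (x * (h : G) * g) * f (x * g) ∂lG ∂lH)
              = 2 * ∫ h : H, (∫ x, f (x * (h : G) * g) * f (x * g) ∂lG) ∂lH from
            integral_const_mul 2 _, integral_const]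
          simp
      _ = 2*A - 2 * Φ g := by rw [hCross g]
  -- conclude ∫ Φ = 0
  have hmain := key F hFcont hFnn
  have hΦint : ∫ g, Φ g ∂lG = 0 := by
    have h2 : ∫ g, (∫ h : H, F (g⁻¹ * (h : G) * g) ∂lH) ∂lG = 2*A - 2 * ∫ g, Φ g ∂lG := by
      rw [integral_congr_ae (Filter.Eventually.of_forall hinner),
        integral_sub (integrable_const _) ((jordan_aux_integrable lG hΦcont).const_mul 2),
        show (∫ g, 2 * Φ g ∂lG) = 2 * ∫ g, Φ g ∂lG from integral_const_mul 2 Φ, integral_const]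
      simp
    have hfin := hLHS.symm.trans (hmain.trans h2)
    linarith
  -- Φ vanishes identically, hence f ≡ 0
  have hΦzero : Φ = 0 := by
    have hae := (integral_eq_zero_iff_of_nonneg
      (fun g => integral_nonneg fun x => sq_nonneg (P g x))
      (jordan_aux_integrable lG hΦcont)).mp hΦint
    exact (Continuous.ae_eq_iff_eq lG hΦcont continuous_zero).mp hae
  have hP1 : ∀ x : G, P 1 x = f x := by
    intro x
    have h1 : ∀ h : H, f (x * (h : G) * 1) = f x := by
      intro h; rw [mul_one]; exact hfinv x h
    calc P 1 x = ∫ h : H, f (x * (h : G) * 1) ∂lH := rfl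
      _ = ∫ _h : H, f x ∂lH := integral_congr_ae (Filter.Eventually.of_forall h1)
      _ = f x := by rw [integral_const]; simp
  have hA0 : (∫ x, (f x)^2 ∂lG) = 0 := by
    have hΦ1 : Φ 1 = 0 := by rw [hΦzero]; rfl
    calc (∫ x, (f x)^2 ∂lG) = ∫ x, (P 1 x)^2 ∂lG :=
          integral_congr_ae (Filter.Eventually.of_forall fun x =>
            (congrArg (fun t : ℝ => t^2) (hP1 x)).symm)
      _ = Φ 1 := rfl
      _ = 0 := hΦ1
  have hfzero : ∀ x, f x = 0 := by
    have hae := (integral_eq_zero_iff_of_nonneg (fun x => sq_nonneg (f x))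
      (jordan_aux_integrable lG (hfc.pow 2))).mp hA0
    have hfn : (fun x => (f x)^2) = 0 :=
      (Continuous.ae_eq_iff_eq lG (hfc.pow 2) continuous_zero).mp hae
    intro x
    have : (f x)^2 = 0 := congrFun hfn x
    exact pow_eq_zero_iff two_ne_zero |>.mp this
  have h1 : f 1 = 0 := hfzero 1
  have ha : f a = 0 := hfzero a
  simp only [hfdef] at h1 ha
  rw [hf0_1] at h1
  rw [hf0_a] at ha
  linarith
end

section
/- Let G be a compact group, E the space of square-integrable complex functions on G with zero mean, with G acting by left translation on the argument. If H is a proper closed subgroup of G, then the restriction to H of this representation has a nonzero fixed vector, while the G-representation on E has no nonzero fixed vector. -/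
open MeasureTheory
open scoped Pointwise

/-! Pick `x₀ ∉ H` and a closed neighbourhood `K` of `1` disjoint from `H x₀`. The closed set
`S = H * K` is invariant under left translation by `H`, has nonempty interior and misses `x₀`, so
both `S` and its complement have positive Haar measure and `1_S - μ S` is a nonzero `H`-fixed vector
of mean zero. Conversely, if `φ` is fixed by all of `G`, Fubini gives
`∫ v φ = (∫ v ∘ inv) (∫ φ) = 0` for every continuous `v`, and continuous functions are dense
in `L²`. -/

section CenteredIndicator

variable {α : Type*} [MeasurableSpace α] {μ : Measure α} {s : Set α}

noncomputable def centeredIndicator (μ : Measure α) (s : Set α) (x : α) : ℂ :=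
  s.indicator (fun _ => 1) x - μ.real s

theorem memLp_centeredIndicator [IsFiniteMeasure μ] (hs : MeasurableSet s) (p : ENNReal) :
    MemLp (centeredIndicator μ s) p μ :=
  (memLp_indicator_const p hs 1 (.inr (measure_ne_top μ s))).sub (memLp_const _)

theorem integral_centeredIndicator [IsProbabilityMeasure μ] (hs : MeasurableSet s) :
    ∫ x, centeredIndicator μ s x ∂μ = 0 := by
  simp only [centeredIndicator]
  rw [integral_sub ((integrable_const 1).indicator hs) (integrable_const _),
    integral_indicator_const _ hs, integral_const, probReal_univ, one_smul, Complex.real_smul,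
    mul_one, sub_self]

theorem centeredIndicator_apply_eq_of_mem_iff {x y : α} (h : x ∈ s ↔ y ∈ s) :
    centeredIndicator μ s x = centeredIndicator μ s y := by
  by_cases hx : x ∈ s
  · simp [centeredIndicator, hx, h.1 hx]
  · simp [centeredIndicator, hx, mt h.2 hx]

theorem centeredIndicator_not_ae_eq_zero (hs : μ s ≠ 0) (hsc : μ sᶜ ≠ 0) :
    ¬ centeredIndicator μ s =ᵐ[μ] 0 := by
  intro h
  obtain ⟨x, hx, hx0⟩ := Measure.exists_mem_of_measure_ne_zero_of_ae hs (ae_restrict_of_ae h)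
  obtain ⟨y, hy, hy0⟩ := Measure.exists_mem_of_measure_ne_zero_of_ae hsc (ae_restrict_of_ae h)
  simp only [centeredIndicator, Pi.zero_apply, sub_eq_zero,
    Set.indicator_of_mem hx, Set.indicator_of_notMem hy] at hx0 hy0
  simp [← hx0] at hy0

end CenteredIndicator

section LeftTranslation

variable {G E : Type*} [Group G] [MeasurableSpace G] [MeasurableMul G] [NormedAddCommGroup E]
  {μ : Measure G} [μ.IsMulLeftInvariant] {p : ENNReal}

theorem MeasureTheory.MemLp.toLp_comp_mul_left_ae_eq {f : G → E} (hf : MemLp f p μ) {g : G}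
    (hg : ∀ x, f (g * x) = f x) : (fun x => hf.toLp f (g * x)) =ᵐ[μ] hf.toLp f := by
  calc (fun x => hf.toLp f (g * x))
      =ᵐ[μ] fun x => f (g * x) :=
        (measurePreserving_mul_left μ g).quasiMeasurePreserving.ae_eq_comp hf.coeFn_toLp
    _ = f := funext hg
    _ =ᵐ[μ] hf.toLp f := hf.coeFn_toLp.symm

end LeftTranslation

theorem Subgroup.mul_mem_coe_mul_iff {G : Type*} [Group G] (H : Subgroup G) (K : Set G) {h : G}
    (hh : h ∈ H) (x : G) : h * x ∈ (H : Set G) * K ↔ x ∈ (H : Set G) * K := by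
  conv_lhs => rw [← smul_coe_set hh, smul_mul_assoc, ← smul_eq_mul h x, Set.smul_mem_smul_set_iff]

theorem Subgroup.exists_isClosed_mul_left_invariant {G : Type*} [Group G] [TopologicalSpace G]
    [IsTopologicalGroup G] [CompactSpace G] (H : Subgroup G) (hH : IsClosed (H : Set G))
    {x₀ : G} (hx₀ : x₀ ∉ H) :
    ∃ S : Set G, IsClosed S ∧ (interior S).Nonempty ∧ x₀ ∉ S ∧
      ∀ h ∈ H, ∀ x, h * x ∈ S ↔ x ∈ S := by
  have hU : (fun y => y * x₀⁻¹) ⁻¹' (H : Set G)ᶜ ∈ nhds (1 : G) :=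
    (hH.isOpen_compl.preimage (continuous_mul_const _)).mem_nhds (by simpa using hx₀)
  obtain ⟨K, hK, hKc, hKU⟩ := exists_mem_nhds_isClosed_subset hU
  refine ⟨(H : Set G) * K, hKc.mul_left_of_isCompact hH.isCompact,
    ⟨1, interior_mono (Set.subset_mul_right K H.one_mem) (mem_interior_iff_mem_nhds.2 hK)⟩,
    ?_, fun h hh x => H.mul_mem_coe_mul_iff K hh x⟩
  rintro ⟨h, hh, k, hk, rfl⟩
  exact hKU hk (by simpa using H.inv_mem hh)

section Invariant

variable {G : Type*} [Group G] [TopologicalSpace G] [IsTopologicalGroup G] [CompactSpace G]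
  [MeasurableSpace G] [BorelSpace G] {μ : Measure G}

/-- Integrate `v (g⁻¹ * y) * f y` over `(g, y)`: integrating in `y` first gives `∫ v * f` by the
invariance of `f`, integrating in `g` first gives `(∫ v ∘ inv) * f y` by the substitution
`g ↦ y * g`. Without second countability, continuity alone does not give measurability for the
product σ-algebra; compactness of the support does. -/
theorem integral_mul_eq_of_forall_ae_eq_comp_mul_left [μ.IsMulLeftInvariant]
    [IsProbabilityMeasure μ] (v : C(G, ℂ)) {f : G → ℂ} (hf : Integrable f μ)
    (hinv : ∀ g : G, (fun x => f (g⁻¹ * x)) =ᵐ[μ] f) :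
    ∫ y, v y * f y ∂μ = (∫ g, v g⁻¹ ∂μ) * ∫ y, f y ∂μ := by
  set F : G → G → ℂ := fun g y => v (g⁻¹ * y) * f y
  have hvcont : Continuous fun p : G × G => v (p.1⁻¹ * p.2) := by fun_prop
  have hF : Integrable (Function.uncurry F) (μ.prod μ) :=
    (hf.comp_snd μ).bdd_mul (c := ‖v‖)
      (HasCompactSupport.stronglyMeasurable_of_prod hvcont
        (.of_compactSpace _)).aestronglyMeasurable
      (.of_forall fun p => v.norm_coe_le_norm _)
  have hrow : ∀ g, ∫ y, F g y ∂μ = ∫ y, v y * f y ∂μ := fun g => by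
    rw [← integral_mul_left_eq_self _ g]
    refine integral_congr_ae ?_
    filter_upwards [hinv g⁻¹] with y hy
    simp_all [F]
  have hcol : ∀ y, ∫ g, F g y ∂μ = (∫ g, v g⁻¹ ∂μ) * f y := fun y => by
    rw [integral_mul_const, ← integral_mul_left_eq_self _ y]
    simp [mul_inv_rev, inv_mul_cancel_right]
  calc ∫ y, v y * f y ∂μ = ∫ _g, ∫ y, v y * f y ∂μ ∂μ := by simp
    _ = ∫ g, ∫ y, F g y ∂μ ∂μ := by simp_rw [hrow]
    _ = ∫ y, ∫ g, F g y ∂μ ∂μ := integral_integral_swap hF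
    _ = (∫ g, v g⁻¹ ∂μ) * ∫ y, f y ∂μ := by simp_rw [hcol]; exact integral_const_mul _ _

theorem MeasureTheory.Lp.eq_zero_of_integral_eq_zero_of_forall_ae_eq_comp_mul_left
    [μ.IsHaarMeasure] [IsProbabilityMeasure μ] (φ : Lp ℂ 2 μ) (hmean : ∫ x, φ x ∂μ = 0)
    (hinv : ∀ g : G, (fun x => φ (g⁻¹ * x)) =ᵐ[μ] φ) : φ = 0 := by
  refine (ContinuousMap.toLp_denseRange ℂ μ ℂ (p := 2) ENNReal.ofNat_ne_top
    ).eq_zero_of_inner_right ℂ fun v => ?_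
  have hint : Integrable φ μ := (Lp.memLp φ).integrable one_le_two
  calc inner ℂ (ContinuousMap.toLp 2 μ ℂ v) φ = ∫ x, star v x * φ x ∂μ := by
        rw [L2.inner_def]
        refine integral_congr_ae ?_
        filter_upwards [ContinuousMap.coeFn_toLp (p := 2) (𝕜 := ℂ) μ v] with x hx
        rw [hx, RCLike.inner_apply, mul_comm]
        rfl
    _ = 0 := by rw [integral_mul_eq_of_forall_ae_eq_comp_mul_left _ hint hinv, hmean, mul_zero]

end Invariant

/-- Let `G` be a compact group with normalized Haar measure, and let `E` be the space of
square-integrable complex functions with zero mean, on which `G` acts by left translation of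
the argument.  If `H` is a proper closed subgroup of `G`, then the restriction of this
representation to `H` admits a nonzero fixed vector, while the `G`-representation on `E` has
no nonzero fixed vector. -/
theorem fixed_vectors_zero_mean_L2 {G : Type*} [Group G] [TopologicalSpace G]
    [IsTopologicalGroup G] [CompactSpace G] [MeasurableSpace G] [BorelSpace G]
    (lG : Measure G) [lG.IsHaarMeasure] [IsProbabilityMeasure lG]
    (H : Subgroup G) (hclosed : IsClosed (H : Set G)) (hproper : H ≠ ⊤) :
    (∃ φ : Lp ℂ 2 lG, φ ≠ 0 ∧ (∫ x, φ x ∂lG) = 0 ∧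
        ∀ h ∈ H, (fun x => φ (h⁻¹ * x)) =ᵐ[lG] φ) ∧
      (∀ φ : Lp ℂ 2 lG, (∫ x, φ x ∂lG) = 0 →
        (∀ g : G, (fun x => φ (g⁻¹ * x)) =ᵐ[lG] φ) → φ = 0) := by
  refine ⟨?_, Lp.eq_zero_of_integral_eq_zero_of_forall_ae_eq_comp_mul_left⟩
  obtain ⟨x₀, hx₀⟩ : ∃ x, x ∉ H := by simpa [Subgroup.eq_top_iff'] using hproper
  obtain ⟨S, hSclosed, hSint, hx₀S, hSinv⟩ := H.exists_isClosed_mul_left_invariant hclosed hx₀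
  have hφ := memLp_centeredIndicator (μ := lG) hSclosed.measurableSet 2
  refine ⟨hφ.toLp _, ?_, ?_, fun h hh => hφ.toLp_comp_mul_left_ae_eq fun x =>
    centeredIndicator_apply_eq_of_mem_iff (hSinv _ (H.inv_mem hh) x)⟩
  · rw [Ne, Lp.eq_zero_iff_ae_eq_zero]
    exact fun h0 => centeredIndicator_not_ae_eq_zero
      (Measure.measure_pos_of_nonempty_interior lG hSint).ne'
      (hSclosed.isOpen_compl.measure_pos lG ⟨x₀, hx₀S⟩).ne' (hφ.coeFn_toLp.symm.trans h0)
  · rw [integral_congr_ae hφ.coeFn_toLp, integral_centeredIndicator hSclosed.measurableSet]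
end

section
/- Every infinite braidable sequence of random variables with values in a topological group G is spreadable: for any strictly increasing sequence of positive integers k₁ < k₂ < …, the sequence (ξ_{k₁}, ξ_{k₂}, …) has the same law as (ξ₁, ξ₂, …). -/
open MeasureTheory

/-- The braid generator `βᵢ` acting on `n`-tuples of a group `G` (`0`-indexed):
`βᵢ • x = (…, xᵢ x_{i+1} xᵢ⁻¹, xᵢ, …)`. -/
def braidGen (n : ℕ) {G : Type*} [Group G] (i : ℕ) (x : Fin n → G) : Fin n → G :=
  fun k =>
    if _hk : (k : ℕ) = i then
      if h2 : i + 1 < n then x k * x ⟨i + 1, h2⟩ * (x k)⁻¹ else x k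
    else if _hk' : (k : ℕ) = i + 1 then x ⟨i, by have := k.isLt; omega⟩
    else x k

/-- The action of the inverse generator `βᵢ⁻¹` (the inverse map of `braidGen n i`). -/
def braidGenInv (n : ℕ) {G : Type*} [Group G] (i : ℕ) (x : Fin n → G) : Fin n → G :=
  fun k =>
    if _hk : (k : ℕ) = i then
      if h2 : i + 1 < n then x ⟨i + 1, h2⟩ else x k
    else if _hk' : (k : ℕ) = i + 1 then (x k)⁻¹ * x ⟨i, by have := k.isLt; omega⟩ * x k
    else x k

/-- The action on `Gⁿ` of a braid written as a word in the generators (`(i, true)` stands for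
`βᵢ`, `(i, false)` for `βᵢ⁻¹`), with the left-action convention `(ab) • x = a • (b • x)`. -/
def wordAction (n : ℕ) {G : Type*} [Group G] (w : List (ℕ × Bool)) :
    (Fin n → G) → Fin n → G :=
  w.foldr (fun p f => (if p.2 then braidGen n p.1 else braidGenInv n p.1) ∘ f) id

/-!
By uniqueness of projective limits it suffices to compare finite-dimensional laws. The inverse
generator `βᵢ⁻¹` slides the strand at position `i + 1` unchanged to position `i`, so a product of
inverse generators moves `x_{k 0}, …, x_{k (n-1)}` unchanged to positions
`0, …, n - 1`. Applied to `(ξ₀, …, ξ_{k n})`, braidability says that this does not change the law,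
and reading off the first `n` coordinates gives the law of `(ξ_{k 0}, …, ξ_{k (n-1)})`.
-/

section BraidWords

variable {G : Type*} [Group G] {N : ℕ}

lemma wordAction_append (w₁ w₂ : List (ℕ × Bool)) (x : Fin N → G) :
    wordAction N (w₁ ++ w₂) x = wordAction N w₁ (wordAction N w₂ x) := by
  induction w₁ with
  | nil => rfl
  | cons p w ih => exact congrArg (if p.2 then braidGen N p.1 else braidGenInv N p.1) ih

lemma wordAction_cons_false (i : ℕ) (w : List (ℕ × Bool)) (x : Fin N → G) :
    wordAction N ((i, false) :: w) x = braidGenInv N i (wordAction N w x) :=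
  rfl

lemma braidGenInv_apply_of_ne (i : ℕ) (x : Fin N → G) {m : Fin N} (h₁ : (m : ℕ) ≠ i)
    (h₂ : (m : ℕ) ≠ i + 1) : braidGenInv N i x m = x m := by
  simp [braidGenInv, h₁, h₂]

lemma braidGenInv_apply_self {i : ℕ} (x : Fin N → G) (hi : i < N) (hi' : i + 1 < N) :
    braidGenInv N i x ⟨i, hi⟩ = x ⟨i + 1, hi'⟩ := by
  simp [braidGenInv, hi']

/-- `β_j⁻¹ β_{j+1}⁻¹ ⋯ β_{m-1}⁻¹`, which carries the strand at position `m` down to position `j`. -/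
def moveWord (j m : ℕ) : List (ℕ × Bool) :=
  (List.range' j (m - j)).map (·, false)

lemma moveWord_eq_cons {j m : ℕ} (h : j < m) : moveWord j m = (j, false) :: moveWord (j + 1) m := by
  obtain ⟨d, rfl⟩ := Nat.exists_eq_add_of_lt h
  simp [moveWord, show j + d + 1 - j = d + 1 by omega, show j + d + 1 - (j + 1) = d by omega,
    List.range'_succ]

lemma lt_of_mem_moveWord {j m : ℕ} {p : ℕ × Bool} (hp : p ∈ moveWord j m) : p.1 < m := by
  simp only [moveWord, List.mem_map, List.mem_range'] at hp
  obtain ⟨i, hi, rfl⟩ := hp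
  omega

lemma wordAction_moveWord_of_lt_or_lt {j m : ℕ} (x : Fin N → G) {i : Fin N}
    (hi : (i : ℕ) < j ∨ m < i) : wordAction N (moveWord j m) x i = x i := by
  rcases lt_or_ge j m with hjm | hmj
  · rw [moveWord_eq_cons hjm, wordAction_cons_false,
      braidGenInv_apply_of_ne _ _ (by omega) (by omega),
      wordAction_moveWord_of_lt_or_lt x (by omega)]
  · simp [moveWord, Nat.sub_eq_zero_of_le hmj, wordAction]
termination_by m - j

lemma wordAction_moveWord_self {j m : ℕ} (x : Fin N → G) (hjm : j ≤ m) (hm : m < N) :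
    wordAction N (moveWord j m) x ⟨j, hjm.trans_lt hm⟩ = x ⟨m, hm⟩ := by
  rcases hjm.lt_or_eq with hjm | rfl
  · rw [moveWord_eq_cons hjm, wordAction_cons_false, braidGenInv_apply_self _ _ (by omega),
      wordAction_moveWord_self x hjm hm]
  · simp [moveWord, wordAction]
termination_by m - j

variable (k : ℕ → ℕ)

/-- A braid whose action brings `x_{k 0}, …, x_{k (n-1)}` to the first `n` positions. -/
def selectWord : ℕ → List (ℕ × Bool)
  | 0 => []
  | n + 1 => moveWord n (k n) ++ selectWord n

variable {k}

lemma lt_of_mem_selectWord (hk : Monotone k) {n : ℕ} {p : ℕ × Bool} (hp : p ∈ selectWord k n) :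
    p.1 < k n := by
  induction n with
  | zero => simp [selectWord] at hp
  | succ n ih =>
    rcases List.mem_append.1 hp with hp | hp
    · exact (lt_of_mem_moveWord hp).trans_le (hk n.le_succ)
    · exact (ih hp).trans_le (hk n.le_succ)

lemma wordAction_selectWord_of_forall_lt {n : ℕ} (x : Fin N → G) {i : Fin N}
    (hi : ∀ j < n, k j < i) : wordAction N (selectWord k n) x i = x i := by
  induction n with
  | zero => rfl
  | succ n ih =>
    have hn : k n < i := hi n n.lt_succ_self
    rw [selectWord, wordAction_append, wordAction_moveWord_of_lt_or_lt _ (Or.inr hn),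
      ih fun j hj => hi j (hj.trans n.lt_succ_self)]

lemma wordAction_selectWord_of_lt (hk : StrictMono k) {n i : ℕ} (x : Fin N → G) (hin : i < n)
    (hiN : i < N) (hkN : k i < N) :
    wordAction N (selectWord k n) x ⟨i, hiN⟩ = x ⟨k i, hkN⟩ := by
  induction n with
  | zero => omega
  | succ n ih =>
    rw [selectWord, wordAction_append]
    rcases (Nat.lt_succ_iff.1 hin).lt_or_eq with hin | rfl
    · rw [wordAction_moveWord_of_lt_or_lt _ (Or.inl hin), ih hin]
    · rw [wordAction_moveWord_self _ hk.le_apply hkN,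
        wordAction_selectWord_of_forall_lt _ fun j hj => hk hj]

end BraidWords

namespace ProbabilityTheory

-- `f` need not be measurable: a map that is not a.e.-measurable pushes `P` forward to `0`.
lemma IdentDistrib.of_map_eq {α Ω : Type*} [MeasurableSpace α] [MeasurableSpace Ω]
    {P : Measure Ω} [IsProbabilityMeasure P] {f g : Ω → α} (hg : AEMeasurable g P)
    (h : P.map f = P.map g) : IdentDistrib f g P P where
  aemeasurable_fst := .of_map_ne_zero (h ▸ (Measure.isProbabilityMeasure_map hg).ne_zero)
  aemeasurable_snd := hg
  map_eq := h

end ProbabilityTheory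

def IsBraidable {G Ω : Type*} [Group G] [MeasurableSpace G] [MeasurableSpace Ω] (P : Measure Ω)
    (ξ : ℕ → Ω → G) : Prop :=
  ∀ (n : ℕ) (w : List (ℕ × Bool)), (∀ p ∈ w, p.1 + 1 < n) →
    P.map (fun ω => wordAction n w (fun i : Fin n => ξ i ω)) =
      P.map (fun ω => fun i : Fin n => ξ i ω)

lemma IsBraidable.map_restrict_comp_eq {G Ω : Type*} [Group G] [MeasurableSpace G]
    [MeasurableSpace Ω] {P : Measure Ω} [IsProbabilityMeasure P] {ξ : ℕ → Ω → G}
    (hξ : IsBraidable P ξ) (hmeas : ∀ i, Measurable (ξ i)) {k : ℕ → ℕ} (hk : StrictMono k)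
    (I : Finset ℕ) :
    P.map (fun ω => I.restrict (fun i => ξ (k i) ω)) = P.map (fun ω => I.restrict (ξ · ω)) := by
  set n := I.sup id + 1
  set N := k n + 1
  have hIn : ∀ i ∈ I, i < n := fun i hi => Nat.lt_succ_of_le (Finset.le_sup (f := id) hi)
  have hkN : ∀ i ∈ I, k i < N := fun i hi => Nat.lt_succ_of_lt (hk (hIn i hi))
  have hiN : ∀ i ∈ I, i < N := fun i hi => hk.le_apply.trans_lt (hkN i hi)
  let u : (Fin N → G) → I → G := fun y i => y ⟨i, hiN i i.2⟩
  have hbraid := hξ N (selectWord k n) fun p hp =>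
    Nat.succ_lt_succ (lt_of_mem_selectWord hk.monotone hp)
  have hlaw := (ProbabilityTheory.IdentDistrib.of_map_eq (by fun_prop) hbraid).comp
    (u := u) (by fun_prop)
  convert hlaw.map_eq using 2
  · ext ω i
    exact (wordAction_selectWord_of_lt hk (fun j : Fin N => ξ j ω) (hIn i i.2) (hiN i i.2)
      (hkN i i.2)).symm
  · rfl

theorem braidable_implies_spreadable_general {G : Type*} [Group G]
    [MeasurableSpace G]
    {Ω : Type*} [MeasurableSpace Ω] (P : Measure Ω) [IsProbabilityMeasure P]
    (ξ : ℕ → Ω → G) (hmeas : ∀ i, Measurable (ξ i))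
    (hbraid : ∀ (n : ℕ) (w : List (ℕ × Bool)), (∀ p ∈ w, p.1 + 1 < n) →
      P.map (fun ω => wordAction n w (fun i : Fin n => ξ i ω)) =
        P.map (fun ω => fun i : Fin n => ξ i ω)) :
    ∀ k : ℕ → ℕ, StrictMono k →
      P.map (fun ω => fun i : ℕ => ξ (k i) ω) = P.map (fun ω => fun i : ℕ => ξ i ω) := by
  intro k hk
  rw [ProbabilityTheory.map_eq_iff_forall_finset_map_restrict_eq (X := fun i => ξ (k i))
    (by fun_prop) (by fun_prop)]
  exact IsBraidable.map_restrict_comp_eq hbraid hmeas hk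

/-- **Braidable implies spreadable.**  Let `ξ = (ξᵢ)_{i≥0}` be an infinite sequence of
`G`-valued random variables that is braidable: for every `n` and every braid `β ∈ Bₙ` (given
by a word in the generators), `β • (ξ₀,…,ξ_{n−1})` has the same law as `(ξ₀,…,ξ_{n−1})`.
Then `ξ` is spreadable: for every strictly increasing sequence `k` of indices,
`(ξ_{k₀}, ξ_{k₁}, …)` has the same law as `(ξ₀, ξ₁, …)`. -/
theorem braidable_implies_spreadable {G : Type*} [Group G] [TopologicalSpace G]
    [IsTopologicalGroup G] [MeasurableSpace G] [BorelSpace G]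
    {Ω : Type*} [MeasurableSpace Ω] (P : Measure Ω) [IsProbabilityMeasure P]
    (ξ : ℕ → Ω → G) (hmeas : ∀ i, Measurable (ξ i))
    (hbraid : ∀ (n : ℕ) (w : List (ℕ × Bool)), (∀ p ∈ w, p.1 + 1 < n) →
      P.map (fun ω => wordAction n w (fun i : Fin n => ξ i ω)) =
        P.map (fun ω => fun i : Fin n => ξ i ω)) :
    ∀ k : ℕ → ℕ, StrictMono k →
      P.map (fun ω => fun i : ℕ => ξ (k i) ω) = P.map (fun ω => fun i : ℕ => ξ i ω) :=
  braidable_implies_spreadable_general P ξ hmeas hbraid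
end

section
/- Let G be a finite group with identity e and let (Y_t)_{t≥0} be a G-valued Lévy process (independent stationary right increments, Y₀ = e, continuous in probability). Then for every t > 0, the support of the law of Y_t equals H_Y, the subgroup generated by the union over all s ≥ 0 of the supports of Y_s, provided e ∈ Supp(Y_s) for all s. -/
/-!
The sets `S t` of values charged by `Y_t` satisfy `S (s + t) = S s * S t`, by independence and
stationarity of the increments, and each contains `1`; hence `t ↦ S t` is monotone. A monotone
map into the finite lattice `Set G` is constant on some interval `(0, s₀]`, and then
`S s₀ = S (s₀/2) * S (s₀/2) = S s₀ * S s₀`, so `S s₀` is closed under multiplication and the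
multiples of `s₀` propagate the constancy to all `t > 0`. A nonempty subset of a finite group
closed under multiplication is a subgroup.
-/

open MeasureTheory ProbabilityTheory
open scoped NNReal Pointwise

section LawSupport

variable {Ω G : Type*} [MeasurableSpace Ω] [MeasurableSpace G]

def lawSupport (P : Measure Ω) (X : Ω → G) : Set G := {g | P {ω | X ω = g} ≠ 0}

variable {P : Measure Ω} {X X' : Ω → G}

lemma lawSupport_eq_of_map_eq [MeasurableSingletonClass G] (hX : Measurable X)
    (hX' : Measurable X') (h : P.map X = P.map X') : lawSupport P X = lawSupport P X' := by
  ext g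
  have hg : P.map X {g} = P.map X' {g} := by rw [h]
  rw [Measure.map_apply hX (measurableSet_singleton g),
    Measure.map_apply hX' (measurableSet_singleton g)] at hg
  exact not_congr (Eq.congr_left hg)

lemma lawSupport_mul [Group G] [Countable G] [MeasurableSingletonClass G] {Z : Ω → G}
    (h : IndepFun X Z P) : lawSupport P (X * Z) = lawSupport P X * lawSupport P Z := by
  have hprod : ∀ a b : G,
      P ({ω | X ω = a} ∩ {ω | Z ω = b}) = P {ω | X ω = a} * P {ω | Z ω = b} := fun a b =>
    h.measure_inter_preimage_eq_mul _ _ (measurableSet_singleton a) (measurableSet_singleton b)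
  ext g
  constructor
  · intro hg
    have hcover : {ω | (X * Z) ω = g} = ⋃ a : G, {ω | X ω = a} ∩ {ω | Z ω = a⁻¹ * g} := by
      ext ω
      simp [eq_inv_mul_iff_mul_eq]
    obtain ⟨a, ha⟩ : ∃ a : G, P ({ω | X ω = a} ∩ {ω | Z ω = a⁻¹ * g}) ≠ 0 := by
      by_contra! hnull
      exact hg (hcover ▸ measure_iUnion_null hnull)
    rw [hprod] at ha
    exact ⟨a, left_ne_zero_of_mul ha, a⁻¹ * g, right_ne_zero_of_mul ha, mul_inv_cancel_left a g⟩
  · rintro ⟨a, ha, b, hb, rfl⟩ hnull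
    have hsub : {ω | X ω = a} ∩ {ω | Z ω = b} ⊆ {ω | (X * Z) ω = a * b} := by
      rintro ω ⟨rfl, rfl⟩
      rfl
    exact mul_ne_zero ha hb (hprod a b ▸ measure_mono_null hsub hnull)

end LawSupport

section Semigroup

variable {G : Type*} [Group G] {S : ℝ≥0 → Set G}

lemma monotone_of_add_eq_mul (hS : ∀ s t, S (s + t) = S s * S t) (h1 : ∀ s, 1 ∈ S s) :
    Monotone S := fun s t hst => by
  rw [← add_tsub_cancel_of_le hst, hS]
  exact Set.subset_mul_left _ (h1 _)

lemma NNReal.exists_pos_forall_eq_of_monotone {α : Type*} [PartialOrder α] [Finite α]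
    {f : ℝ≥0 → α} (hf : Monotone f) : ∃ s₀ > 0, ∀ s, 0 < s → s ≤ s₀ → f s = f s₀ := by
  obtain ⟨s₀, hs₀, hmin⟩ := (Set.toFinite (f '' Set.Ioi 0)).exists_minimalFor' f (Set.Ioi 0)
    Set.nonempty_Ioi
  exact ⟨s₀, hs₀, fun s hs hss₀ => le_antisymm (hf hss₀) (hmin hs (hf hss₀))⟩

lemma eq_of_pos_of_add_eq_mul [Finite G] (hS : ∀ s t, S (s + t) = S s * S t)
    (h1 : ∀ s, 1 ∈ S s) {s t : ℝ≥0} (hs : 0 < s) (ht : 0 < t) : S s = S t := by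
  have hmono := monotone_of_add_eq_mul hS h1
  obtain ⟨s₀, hs₀, hconst⟩ := NNReal.exists_pos_forall_eq_of_monotone hmono
  have hidem : S s₀ * S s₀ = S s₀ := by
    have hhalf := hconst (s₀ / 2) (half_pos hs₀) (half_le_self hs₀.le)
    rw [← hhalf, ← hS, add_halves, hhalf]
  have hmultiple : ∀ n : ℕ, S ((n + 1) • s₀) = S s₀ := by
    intro n
    induction n with
    | zero => rw [zero_add, one_smul]
    | succ n ih => rw [succ_nsmul, hS, ih, hidem]
  suffices ∀ t, 0 < t → S t = S s₀ from (this s hs).trans (this t ht).symm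
  intro t ht
  obtain ⟨n, hn⟩ := Archimedean.arch t hs₀
  refine le_antisymm ?_ ?_
  · calc S t ≤ S ((n + 1) • s₀) := hmono (hn.trans (nsmul_le_nsmul_left hs₀.le n.le_succ))
      _ = S s₀ := hmultiple n
  · calc S s₀ = S (min t s₀) := (hconst _ (lt_min ht hs₀) (min_le_right t s₀)).symm
      _ ≤ S t := hmono (min_le_left t s₀)

lemma iUnion_eq_of_add_eq_mul [Finite G] (hS : ∀ s t, S (s + t) = S s * S t)
    (h1 : ∀ s, 1 ∈ S s) {t : ℝ≥0} (ht : 0 < t) : ⋃ s, S s = S t := by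
  refine subset_antisymm (Set.iUnion_subset fun s => ?_) (Set.subset_iUnion S t)
  calc S s ≤ S (s + t) := monotone_of_add_eq_mul hS h1 le_self_add
    _ = S t := eq_of_pos_of_add_eq_mul hS h1 (add_pos_of_nonneg_of_pos s.2 ht) ht

end Semigroup

lemma Subgroup.coe_closure_eq_of_mul_subset {G : Type*} [Group G] [Finite G] {A : Set G}
    (h1 : 1 ∈ A) (hA : A * A ⊆ A) : (closure A : Set G) = A := by
  let M : Submonoid G := ⟨⟨A, fun ha hb => hA (Set.mul_mem_mul ha hb)⟩, h1⟩
  calc (closure A : Set G) = ((closure A).toSubmonoid : Set G) := rfl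
    _ = Submonoid.closure (M : Set G) := by rw [closure_toSubmonoid_of_finite]; rfl
    _ = A := congrArg SetLike.coe (Submonoid.closure_eq M)

lemma lawSupport_add_eq_mul {G : Type*} [Group G] [Countable G]
    [MeasurableSpace G] [MeasurableSingletonClass G]
    {Ω : Type*} [MeasurableSpace Ω] {P : Measure Ω}
    {Y : ℝ≥0 → Ω → G} (hmeas : ∀ t, Measurable (Y t))
    (hstat : ∀ s t : ℝ≥0, s ≤ t →
      P.map (fun ω => (Y s ω)⁻¹ * Y t ω) = P.map (Y (t - s)))
    (hind : ∀ s t : ℝ≥0, s ≤ t →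
      Indep
        (⨆ u : ℝ≥0, ⨆ _ : u ≤ s, MeasurableSpace.comap (Y u) inferInstance)
        (MeasurableSpace.comap (fun ω => (Y s ω)⁻¹ * Y t ω) inferInstance) P)
    (s t : ℝ≥0) :
    lawSupport P (Y (s + t)) = lawSupport P (Y s) * lawSupport P (Y t) := by
  set Z : Ω → G := fun ω => (Y s ω)⁻¹ * Y (s + t) ω
  have hY : Y (s + t) = Y s * Z := funext fun ω => (mul_inv_cancel_left (Y s ω) _).symm
  have hZlaw : P.map Z = P.map (Y t) := by
    simpa only [add_tsub_cancel_left] using hstat s (s + t) le_self_add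
  have hindep : IndepFun (Y s) Z P := (IndepFun_iff_Indep _ _ _).2 <|
    indep_of_indep_of_le_left (hind s (s + t) le_self_add) (le_iSup₂_of_le s le_rfl le_rfl)
  rw [hY, lawSupport_mul hindep,
    lawSupport_eq_of_map_eq (X := Z) ((hmeas s).inv.mul (hmeas (s + t))) (hmeas t) hZlaw]

theorem levy_process_support_finite_group_general {G : Type*} [Group G] [Finite G]
    [MeasurableSpace G] [MeasurableSingletonClass G]
    {Ω : Type*} [MeasurableSpace Ω] (P : Measure Ω)
    (Y : ℝ≥0 → Ω → G) (hmeas : ∀ t, Measurable (Y t))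
    (hstat : ∀ s t : ℝ≥0, s ≤ t →
      P.map (fun ω => (Y s ω)⁻¹ * Y t ω) = P.map (Y (t - s)))
    (hind : ∀ s t : ℝ≥0, s ≤ t →
      ProbabilityTheory.Indep
        (⨆ u : ℝ≥0, ⨆ _ : u ≤ s, MeasurableSpace.comap (Y u) inferInstance)
        (MeasurableSpace.comap (fun ω => (Y s ω)⁻¹ * Y t ω) inferInstance) P)
    (hone : ∀ s : ℝ≥0, P {ω | Y s ω = 1} ≠ 0) :
    ∀ t : ℝ≥0, 0 < t →
      {g : G | P {ω | Y t ω = g} ≠ 0} =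
        ((Subgroup.closure (⋃ s : ℝ≥0, {g : G | P {ω | Y s ω = g} ≠ 0}) : Subgroup G) :
          Set G) := by
  intro t ht
  have hS := lawSupport_add_eq_mul hmeas hstat hind
  have h1 : ∀ s, 1 ∈ lawSupport P (Y s) := hone
  have hidem : lawSupport P (Y t) * lawSupport P (Y t) = lawSupport P (Y t) := by
    rw [← hS, eq_of_pos_of_add_eq_mul hS h1 (add_pos ht ht) ht]
  change lawSupport P (Y t) = (Subgroup.closure (⋃ s, lawSupport P (Y s)) : Set G)
  rw [iUnion_eq_of_add_eq_mul hS h1 ht,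
    Subgroup.coe_closure_eq_of_mul_subset (h1 t) hidem.subset]

/-- Let `G` be a finite group and `(Y_t)_{t ≥ 0}` a `G`-valued Lévy process (a.s. `Y₀ = e`,
stationary right increments, increments independent of the past, continuity in probability).
If the identity belongs to the support of the law of every `Y_s`, then for every `t > 0` the
support of the law of `Y_t` equals the subgroup `H_Y` generated by the union of the supports
of all the `Y_s`. -/
theorem levy_process_support_finite_group {G : Type*} [Group G] [Finite G]
    [MeasurableSpace G] [MeasurableSingletonClass G]
    {Ω : Type*} [MeasurableSpace Ω] (P : Measure Ω) [IsProbabilityMeasure P]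
    (Y : ℝ≥0 → Ω → G) (hmeas : ∀ t, Measurable (Y t))
    (h0 : ∀ᵐ ω ∂P, Y 0 ω = 1)
    (hstat : ∀ s t : ℝ≥0, s ≤ t →
      P.map (fun ω => (Y s ω)⁻¹ * Y t ω) = P.map (Y (t - s)))
    (hind : ∀ s t : ℝ≥0, s ≤ t →
      ProbabilityTheory.Indep
        (⨆ u : ℝ≥0, ⨆ _ : u ≤ s, MeasurableSpace.comap (Y u) inferInstance)
        (MeasurableSpace.comap (fun ω => (Y s ω)⁻¹ * Y t ω) inferInstance) P)
    (hcont : ∀ t : ℝ≥0,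
      Filter.Tendsto (fun s => P {ω | Y s ω ≠ Y t ω}) (nhds t) (nhds 0))
    (hone : ∀ s : ℝ≥0, P {ω | Y s ω = 1} ≠ 0) :
    ∀ t : ℝ≥0, 0 < t →
      {g : G | P {ω | Y t ω = g} ≠ 0} =
        ((Subgroup.closure (⋃ s : ℝ≥0, {g : G | P {ω | Y s ω = g} ≠ 0}) : Subgroup G) :
          Set G) :=
  levy_process_support_finite_group_general P Y hmeas hstat hind hone
end

section
/- Let φ: ∂𝔻 → ∂𝔻 be an orientation-preserving homeomorphism of the unit circle. Then there exists an orientation-preserving diffeomorphism Ψ of the complement of the open unit disk {z ∈ ℝ² : |z| > 1} onto itself such that for every x ∈ ∂𝔻, Ψ(y) → φ(x) as y → x. -/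
open Filter Real Complex intervalIntegral

noncomputable section

def Complex.abs : AbsoluteValue ℂ ℝ := NormedField.toAbsoluteValue ℂ
lemma Complex.abs_apply' (z : ℂ) : Complex.abs z = ‖z‖ := rfl
lemma Complex.norm_eq_abs (z : ℂ) : ‖z‖ = Complex.abs z := rfl
@[simp] lemma Complex.abs_exp (z : ℂ) : Complex.abs (Complex.exp z) = Real.exp z.re :=
  Complex.norm_exp z
lemma Complex.normSq_eq_abs (z : ℂ) : Complex.normSq z = Complex.abs z ^ 2 :=
  Complex.normSq_eq_norm_sq z
lemma Complex.sq_abs (z : ℂ) : Complex.abs z ^ 2 = Complex.normSq z :=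
  Complex.sq_norm z
@[simp] lemma Complex.abs_ofReal (r : ℝ) : Complex.abs (r : ℂ) = |r| := Complex.norm_real r
@[simp] lemma Complex.abs_conj (z : ℂ) : Complex.abs ((starRingEnd ℂ) z) = Complex.abs z :=
  Complex.norm_conj z
@[simp] lemma Complex.abs_two' : Complex.abs 2 = 2 := by
  rw [Complex.abs_apply']; norm_num
lemma Complex.continuous_abs : Continuous Complex.abs := continuous_norm
lemma Complex.abs_mul_exp_arg_mul_I (x : ℂ) :
    (Complex.abs x : ℂ) * Complex.exp (Complex.arg x * Complex.I) = x :=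
  Complex.norm_mul_exp_arg_mul_I x

namespace CHED

variable (f : ℝ → ℝ)

def pp : ℝ → ℝ := fun t => f t - t
def ee (t : ℝ) : ℂ := Complex.exp (2 * π * Complex.I * t)
def UU : ℂ → ℂ := fun w => ∫ t in (0:ℝ)..1, (pp f t : ℂ) * ((ee t + w) / (ee t - w))
def PP (w : ℂ) (t : ℝ) : ℝ := (1 - Complex.normSq w) / Complex.normSq (ee t - w)
def VV : ℂ → ℝ := fun z => (Complex.normSq z)⁻¹ * (UU f ((starRingEnd ℂ z)⁻¹)).re
def Psi : ℂ → ℂ := fun z => z * Complex.exp (2 * π * Complex.I * (VV f z : ℂ))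
def BB : ℂ → ℂ := fun ζ => ζ + 2 * π * Complex.I * (VV f (Complex.exp ζ) : ℂ)
def gg (x y : ℝ) : ℝ := y + 2 * π * VV f (Complex.exp (x + y * Complex.I))

lemma abs_ee (t : ℝ) : Complex.abs (ee t) = 1 := by
  rw [ee, Complex.abs_exp]; simp

lemma normSq_ee (t : ℝ) : Complex.normSq (ee t) = 1 := by
  rw [Complex.normSq_eq_abs, abs_ee]; norm_num

lemma ee_ne_zero (t : ℝ) : ee t ≠ 0 := Complex.exp_ne_zero _

lemma ee_add (s t : ℝ) : ee (s + t) = ee s * ee t := by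
  rw [ee, ee, ee, ← Complex.exp_add]; push_cast; ring_nf

lemma ee_one : ee 1 = 1 := by
  rw [ee]; push_cast
  rw [show (2:ℂ) * π * Complex.I * 1 = 2 * π * Complex.I by ring, Complex.exp_two_pi_mul_I]

lemma ee_per (t : ℝ) : ee (t + 1) = ee t := by rw [ee_add, ee_one, mul_one]

lemma ee_sub_ne {w : ℂ} (h : Complex.abs w < 1) (t : ℝ) : ee t - w ≠ 0 := by
  intro hc
  rw [sub_eq_zero] at hc
  rw [← hc, abs_ee] at h; exact lt_irrefl _ h

lemma pp_per (hper : ∀ x : ℝ, f (x + 1) = f x + 1) (t : ℝ) : pp f (t + 1) = pp f t := by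
  simp only [pp, hper t]; ring

lemma pp_cont (hf : Continuous f) : Continuous (pp f) := hf.sub continuous_id

lemma normSq_pos_sub {w : ℂ} (h : Complex.abs w < 1) (t : ℝ) :
    0 < Complex.normSq (ee t - w) := by
  rw [Complex.normSq_pos]; exact ee_sub_ne h t

lemma PP_pos {w : ℂ} (h : Complex.abs w < 1) (t : ℝ) : 0 < PP w t := by
  apply div_pos _ (normSq_pos_sub h t)
  have : Complex.normSq w < 1 := by
    rw [Complex.normSq_eq_abs]; nlinarith [Complex.abs.nonneg w]
  linarith

lemma PP_per (w : ℂ) (t : ℝ) : PP w (t + 1) = PP w t := by rw [PP, PP, ee_per]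

/-- real part of the Herglotz kernel is the Poisson kernel -/
lemma reK {w : ℂ} (h : Complex.abs w < 1) (t : ℝ) :
    (((ee t + w) / (ee t - w))).re = PP w t := by
  have hne := ee_sub_ne h t
  rw [Complex.div_re, PP]
  have h1 : (ee t + w).re * (ee t - w).re + (ee t + w).im * (ee t - w).im
      = ((ee t + w) * (starRingEnd ℂ (ee t - w))).re := by
    simp [Complex.mul_re, Complex.conj_re, Complex.conj_im]; ring
  have h2 : ((ee t + w) * (starRingEnd ℂ (ee t - w))) =
      (1 - Complex.normSq w : ℝ) + (w * (starRingEnd ℂ (ee t)) - starRingEnd ℂ (w * (starRingEnd ℂ (ee t)))) := by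
    have e1 : ee t * starRingEnd ℂ (ee t) = (Complex.normSq (ee t) : ℝ) := Complex.mul_conj _
    have e2 : w * starRingEnd ℂ w = (Complex.normSq w : ℝ) := Complex.mul_conj _
    rw [normSq_ee] at e1
    push_cast
    rw [map_sub, mul_sub, add_mul, add_mul]
    rw [e1, e2]
    simp [map_mul, Complex.conj_conj]
    ring
  have h3 : ((ee t + w) * (starRingEnd ℂ (ee t - w))).re = 1 - Complex.normSq w := by
    rw [h2]
    simp [Complex.add_re, Complex.sub_re, Complex.conj_re]
  rw [← add_div, h1, h3]


lemma ee_cont : Continuous ee := by unfold ee; fun_prop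

lemma Kcont {w : ℂ} (h : Complex.abs w < 1) :
    Continuous (fun t => (ee t + w) / (ee t - w)) := by
  apply Continuous.div ((ee_cont).add continuous_const) ((ee_cont).sub continuous_const)
  exact fun t => ee_sub_ne h t

lemma PPcont {w : ℂ} (h : Complex.abs w < 1) : Continuous (PP w) := by
  apply Continuous.div continuous_const (Complex.continuous_normSq.comp ((ee_cont).sub continuous_const))
  exact fun t => (normSq_pos_sub h t).ne'

/-- the key Cauchy integral: mean value of the Herglotz kernel -/
lemma mass {w : ℂ} (h : Complex.abs w < 1) :
    ∫ t in (0:ℝ)..1, (ee t + w) / (ee t - w) = 1 := by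
  have hball : w ∈ Metric.ball (0:ℂ) 1 := by
    simpa [Metric.mem_ball, Complex.dist_eq, Complex.abs_apply'] using h
  have hC : (∮ z in C((0:ℂ), 1), (z - w)⁻¹) = 2 * π * Complex.I :=
    circleIntegral.integral_sub_inv_of_mem_ball hball
  have hdef : (∮ z in C((0:ℂ), 1), (z - w)⁻¹)
      = ∫ θ in (0:ℝ)..(2*π), Complex.I * (Complex.exp (θ * Complex.I) * (Complex.exp (θ * Complex.I) - w)⁻¹) := by
    rw [circleIntegral]
    congr 1; funext θ
    simp [deriv_circleMap, circleMap, smul_eq_mul]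
    ring
  have hI : ∫ θ in (0:ℝ)..(2*π), Complex.exp (θ * Complex.I) * (Complex.exp (θ * Complex.I) - w)⁻¹
      = 2 * π := by
    have := hC
    rw [hdef, intervalIntegral.integral_const_mul] at this
    have hIne : (Complex.I : ℂ) ≠ 0 := Complex.I_ne_zero
    have h2 : (Complex.I : ℂ) * (∫ θ in (0:ℝ)..(2*π), Complex.exp (θ * Complex.I) * (Complex.exp (θ * Complex.I) - w)⁻¹)
        = Complex.I * (2 * π) := by linear_combination this
    exact mul_left_cancel₀ hIne h2
  -- substitution θ = 2π t
  have hsub : ∫ t in (0:ℝ)..1, ee t * (ee t - w)⁻¹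
      = (2*π)⁻¹ • ∫ θ in (0:ℝ)..(2*π), Complex.exp (θ * Complex.I) * (Complex.exp (θ * Complex.I) - w)⁻¹ := by
    have h2π : (2*π : ℝ) ≠ 0 := by positivity
    have := intervalIntegral.integral_comp_mul_left
      (a := (0:ℝ)) (b := 1) (c := 2*π)
      (fun θ => Complex.exp (θ * Complex.I) * (Complex.exp (θ * Complex.I) - w)⁻¹) h2π
    rw [mul_zero, mul_one] at this
    rw [← this]
    congr 1; funext t
    have : ee t = Complex.exp ((2*π*t : ℝ) * Complex.I) := by
      rw [ee]; push_cast; ring_nf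
    rw [this]
  have hEI : ∫ t in (0:ℝ)..1, ee t * (ee t - w)⁻¹ = 1 := by
    rw [hsub, hI]
    have h2π : (2*π : ℝ) ≠ 0 := by positivity
    rw [Complex.real_smul]
    push_cast
    field_simp
  -- (e+w)/(e-w) = 2 e (e-w)⁻¹ - 1
  have hid : ∀ t : ℝ, (ee t + w) / (ee t - w) = 2 * (ee t * (ee t - w)⁻¹) - 1 := by
    intro t
    have hne := ee_sub_ne h t
    field_simp
    ring
  rw [intervalIntegral.integral_congr (fun t _ => hid t)]
  have hint1 : IntervalIntegrable (fun t : ℝ => ee t * (ee t - w)⁻¹) MeasureTheory.volume 0 1 := by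
    apply Continuous.intervalIntegrable
    exact (ee_cont).mul ((ee_cont.sub continuous_const).inv₀ (fun t => ee_sub_ne h t))
  rw [intervalIntegral.integral_sub (by
      simpa using hint1.const_mul (2:ℂ)) intervalIntegrable_const]
  rw [intervalIntegral.integral_const_mul, hEI]
  simp
  norm_num

lemma PP_mass {w : ℂ} (h : Complex.abs w < 1) : ∫ t in (0:ℝ)..1, PP w t = 1 := by
  have hint : IntervalIntegrable (fun t => (ee t + w) / (ee t - w)) MeasureTheory.volume 0 1 :=
    (Kcont h).intervalIntegrable _ _
  have := Complex.reCLM.intervalIntegral_comp_comm hint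
  rw [mass h] at this
  simp only [Complex.reCLM_apply] at this
  rw [← intervalIntegral.integral_congr (fun t _ => reK h t)]
  simpa using this

lemma UU_re (hf : Continuous f) {w : ℂ} (h : Complex.abs w < 1) :
    (UU f w).re = ∫ t in (0:ℝ)..1, pp f t * PP w t := by
  have hint : IntervalIntegrable (fun t => (pp f t : ℂ) * ((ee t + w) / (ee t - w))) MeasureTheory.volume 0 1 := by
    apply Continuous.intervalIntegrable
    exact (Complex.continuous_ofReal.comp (pp_cont f hf)).mul (Kcont h)
  have := Complex.reCLM.intervalIntegral_comp_comm hint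
  have h2 : (∫ t in (0:ℝ)..1, (pp f t : ℂ) * ((ee t + w) / (ee t - w))).re
      = ∫ t in (0:ℝ)..1, ((pp f t : ℂ) * ((ee t + w) / (ee t - w))).re := by
    simpa using this.symm
  rw [UU, h2]
  apply intervalIntegral.integral_congr
  intro t _
  show ((pp f t : ℂ) * ((ee t + w) / (ee t - w))).re = pp f t * PP w t
  rw [show ((pp f t : ℂ) * ((ee t + w) / (ee t - w))).re = pp f t * ((ee t + w) / (ee t - w)).re by
    simp [Complex.mul_re]]
  rw [reK h t]


lemma UU_hasDeriv (hf : Continuous f) {w₀ : ℂ} (h : Complex.abs w₀ < 1) :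
    HasDerivAt (UU f)
      (∫ t in (0:ℝ)..1, 2 * (pp f t : ℂ) * ee t * ((ee t - w₀)^2)⁻¹) w₀ := by
  set ε : ℝ := (1 - Complex.abs w₀) / 2 with hε
  have hεpos : 0 < ε := by rw [hε]; linarith
  obtain ⟨M, hM⟩ : ∃ M, ∀ t ∈ Set.Icc (0:ℝ) 1, ‖pp f t‖ ≤ M :=
    (isCompact_Icc).exists_bound_of_continuousOn (pp_cont f hf).continuousOn
  have hMpos : 0 ≤ M := le_trans (norm_nonneg _) (hM 0 (by norm_num))
  have habsx : ∀ x ∈ Metric.ball w₀ ε, Complex.abs x < 1 := by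
    intro x hx
    rw [Metric.mem_ball, Complex.dist_eq, Complex.norm_eq_abs] at hx
    have := Complex.abs.le_sub x w₀
    have h2 : Complex.abs x - Complex.abs w₀ ≤ Complex.abs (x - w₀) :=
      (Complex.abs.le_sub x w₀)
    rw [hε] at *
    linarith
  have hlow : ∀ x ∈ Metric.ball w₀ ε, ∀ t : ℝ, ε ≤ Complex.abs (ee t - x) := by
    intro x hx t
    rw [Metric.mem_ball, Complex.dist_eq, Complex.norm_eq_abs] at hx
    have h1 : Complex.abs (ee t) - Complex.abs x ≤ Complex.abs (ee t - x) :=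
      Complex.abs.le_sub _ _
    have h2 : Complex.abs x - Complex.abs w₀ ≤ Complex.abs (x - w₀) :=
      Complex.abs.le_sub x w₀
    rw [abs_ee] at h1
    rw [hε] at *
    linarith
  have key := intervalIntegral.hasDerivAt_integral_of_dominated_loc_of_deriv_le
    (F := fun x t => (pp f t : ℂ) * ((ee t + x)/(ee t - x)))
    (F' := fun x t => 2 * (pp f t : ℂ) * ee t * ((ee t - x)^2)⁻¹)
    (x₀ := w₀) (a := 0) (b := 1) (bound := fun _ => 2 * M / ε^2)
    (μ := MeasureTheory.volume) (Metric.ball_mem_nhds w₀ hεpos)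
    (by
      filter_upwards [Metric.ball_mem_nhds w₀ hεpos] with x hx
      exact ((Complex.continuous_ofReal.comp (pp_cont f hf)).mul (Kcont (habsx x hx))).aestronglyMeasurable)
    (((Complex.continuous_ofReal.comp (pp_cont f hf)).mul (Kcont h)).intervalIntegrable 0 1)
    (by
      apply Continuous.aestronglyMeasurable
      apply Continuous.mul
      · exact (continuous_const.mul (Complex.continuous_ofReal.comp (pp_cont f hf))).mul ee_cont
      · exact ((((ee_cont).sub continuous_const).pow 2).inv₀
          (fun t => pow_ne_zero 2 (ee_sub_ne h t))))
    (by
      apply MeasureTheory.ae_of_all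
      intro t ht x hx
      have ht' : t ∈ Set.Icc (0:ℝ) 1 := by
        rw [Set.uIoc_of_le (by norm_num : (0:ℝ) ≤ 1)] at ht
        exact Set.mem_Icc_of_Ioc ht
      have hle : ε ≤ Complex.abs (ee t - x) := hlow x hx t
      rw [norm_mul, norm_mul, norm_mul]
      simp only [Complex.norm_eq_abs, Complex.abs_ofReal, abs_ee, mul_one, map_inv₀, map_pow]
      have h1 : |pp f t| ≤ M := by simpa using hM t ht'
      have h2 : (Complex.abs (ee t - x) ^ 2)⁻¹ ≤ (ε^2)⁻¹ := by
        apply inv_anti₀ (by positivity)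
        exact pow_le_pow_left₀ (le_of_lt hεpos) hle 2
      have h3 : (0:ℝ) ≤ (Complex.abs (ee t - x) ^ 2)⁻¹ := by positivity
      calc Complex.abs 2 * |pp f t| * (Complex.abs (ee t - x) ^ 2)⁻¹
          ≤ 2 * M * (ε^2)⁻¹ := by
            rw [show Complex.abs 2 = 2 by simp]
            apply mul_le_mul (by nlinarith) h2 h3 (by positivity)
        _ = 2 * M / ε^2 := by ring)
    (intervalIntegrable_const)
    (by
      apply MeasureTheory.ae_of_all
      intro t _ x hx
      have hne : ee t - x ≠ 0 := ee_sub_ne (habsx x hx) t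
      have h1 : HasDerivAt (fun y : ℂ => ee t + y) 1 x := by
        simpa using (hasDerivAt_id x).const_add (ee t)
      have h2 : HasDerivAt (fun y : ℂ => ee t - y) (-1) x := by
        exact (hasDerivAt_id x).const_sub (ee t)
      have h3 := (h1.div h2 hne)
      have h4 := h3.const_mul ((pp f t : ℂ))
      convert h4 using 1
      · rfl
      · rfl
      · ring)
  exact key.2

lemma UU_an (hf : Continuous f) : AnalyticOnNhd ℂ (UU f) (Metric.ball 0 1) := by
  apply DifferentiableOn.analyticOnNhd _ Metric.isOpen_ball
  intro w hw
  rw [Metric.mem_ball, Complex.dist_eq, sub_zero] at hw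
  exact ((UU_hasDeriv f hf hw).differentiableAt).differentiableWithinAt

lemma UU_cdiff (hf : Continuous f) {w : ℂ} (h : Complex.abs w < 1) :
    ContDiffAt ℝ (⊤ : ℕ∞) (UU f) w := by
  have hw : w ∈ Metric.ball (0:ℂ) 1 := by
    rw [Metric.mem_ball, Complex.dist_eq, sub_zero]; exact h
  exact ((UU_an f hf w hw).restrictScalars).contDiffAt

lemma UU_contAt (hf : Continuous f) {w : ℂ} (h : Complex.abs w < 1) :
    ContinuousAt (UU f) w :=
  (UU_hasDeriv f hf h).differentiableAt.continuousAt


lemma abs_rho_ee {ρ : ℝ} (hρ : ρ ∈ Set.Ioo (0:ℝ) 1) (θ : ℝ) :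
    Complex.abs ((ρ:ℂ) * ee θ) < 1 := by
  rw [map_mul, abs_ee, Complex.abs_ofReal, mul_one, abs_of_pos hρ.1]
  exact hρ.2

lemma poisson_shift (hf : Continuous f) (hper : ∀ x : ℝ, f (x + 1) = f x + 1)
    {ρ : ℝ} (hρ : ρ ∈ Set.Ioo (0:ℝ) 1) (θ : ℝ) :
    (UU f ((ρ:ℂ) * ee θ)).re = ∫ s in (0:ℝ)..1, pp f (θ + s) * PP (ρ:ℂ) s := by
  have habs := abs_rho_ee hρ θ
  rw [UU_re f hf habs]
  have hPP : ∀ t : ℝ, PP ((ρ:ℂ) * ee θ) t = PP (ρ:ℂ) (t - θ) := by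
    intro t
    rw [PP, PP]
    have h1 : Complex.normSq ((ρ:ℂ) * ee θ) = Complex.normSq (ρ:ℂ) := by
      rw [Complex.normSq_mul, normSq_ee, mul_one]
    have h2 : ee t - (ρ:ℂ) * ee θ = ee θ * (ee (t - θ) - (ρ:ℂ)) := by
      rw [mul_sub, ← ee_add]
      ring_nf
    rw [h1, h2, Complex.normSq_mul, normSq_ee, one_mul]
  rw [intervalIntegral.integral_congr (g := fun t => pp f t * PP (ρ:ℂ) (t - θ))
    (fun t _ => by rw [hPP t])]
  have hsub := intervalIntegral.integral_comp_sub_right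
    (a := 0) (b := 1) (fun s => pp f (θ + s) * PP (ρ:ℂ) s) θ
  have heq : ∀ t : ℝ, pp f (θ + (t - θ)) * PP (ρ:ℂ) (t - θ) = pp f t * PP (ρ:ℂ) (t - θ) := by
    intro t; rw [show θ + (t - θ) = t by ring]
  rw [intervalIntegral.integral_congr (fun t _ => (heq t).symm), hsub]
  have hperiodic : Function.Periodic (fun s => pp f (θ + s) * PP (ρ:ℂ) s) 1 := by
    intro s
    simp only
    rw [show θ + (s + 1) = (θ + s) + 1 by ring, pp_per f hper, PP_per]
  have := hperiodic.intervalIntegral_add_eq (0 - θ) 0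
  rw [show (0:ℝ) - θ + 1 = 1 - θ by ring] at this
  rw [this, zero_add]

lemma G_rep (hf : Continuous f) (hper : ∀ x : ℝ, f (x + 1) = f x + 1)
    {ρ : ℝ} (hρ : ρ ∈ Set.Ioo (0:ℝ) 1) (θ : ℝ) :
    θ + (UU f ((ρ:ℂ) * ee θ)).re = ∫ s in (0:ℝ)..1, (f (θ + s) - s) * PP (ρ:ℂ) s := by
  have habsρ : Complex.abs (ρ:ℂ) < 1 := by
    rw [Complex.abs_ofReal, abs_of_pos hρ.1]; exact hρ.2
  rw [poisson_shift f hf hper hρ θ]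
  have hmass : ∫ s in (0:ℝ)..1, PP (ρ:ℂ) s = 1 := PP_mass habsρ
  have hint1 : IntervalIntegrable (fun s => θ * PP (ρ:ℂ) s) MeasureTheory.volume 0 1 :=
    ((continuous_const.mul (PPcont habsρ))).intervalIntegrable 0 1
  have hint2 : IntervalIntegrable (fun s => pp f (θ + s) * PP (ρ:ℂ) s) MeasureTheory.volume 0 1 :=
    (((pp_cont f hf).comp (continuous_const.add continuous_id)).mul (PPcont habsρ)).intervalIntegrable 0 1
  have : θ = ∫ s in (0:ℝ)..1, θ * PP (ρ:ℂ) s := by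
    rw [intervalIntegral.integral_const_mul, hmass, mul_one]
  nth_rewrite 1 [this]
  rw [← intervalIntegral.integral_add hint1 hint2]
  apply intervalIntegral.integral_congr
  intro s _
  simp only [pp]
  ring

lemma G_mono (hf : Continuous f) (hmono : StrictMono f) (hper : ∀ x : ℝ, f (x + 1) = f x + 1)
    {ρ : ℝ} (hρ : ρ ∈ Set.Ioo (0:ℝ) 1) :
    Monotone (fun θ => θ + (UU f ((ρ:ℂ) * ee θ)).re) := by
  have habsρ : Complex.abs (ρ:ℂ) < 1 := by
    rw [Complex.abs_ofReal, abs_of_pos hρ.1]; exact hρ.2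
  intro θ₁ θ₂ h
  simp only
  rw [G_rep f hf hper hρ, G_rep f hf hper hρ]
  apply intervalIntegral.integral_mono_on (by norm_num)
  · exact (((hf.comp (continuous_const.add continuous_id)).sub continuous_id).mul (PPcont habsρ)).intervalIntegrable 0 1
  · exact (((hf.comp (continuous_const.add continuous_id)).sub continuous_id).mul (PPcont habsρ)).intervalIntegrable 0 1
  · intro s _
    apply mul_le_mul_of_nonneg_right _ (le_of_lt (PP_pos habsρ s))
    have := hmono.monotone (by linarith : θ₁ + s ≤ θ₂ + s)
    linarith

lemma VV_exp (x y : ℝ) :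
    VV f (Complex.exp (x + y * Complex.I))
      = (Real.exp (-x))^2 * (UU f ((Real.exp (-x) : ℂ) * ee (y / (2*π)))).re := by
  rw [VV]
  have hre : ((x:ℂ) + y * Complex.I).re = x := by simp
  have h1 : Complex.normSq (Complex.exp ((x:ℂ) + y * Complex.I)) = (Real.exp x)^2 := by
    rw [Complex.normSq_eq_abs, Complex.abs_exp, hre]
  have h2 : (starRingEnd ℂ) (Complex.exp ((x:ℂ) + y * Complex.I))
      = Complex.exp ((x:ℂ) - y * Complex.I) := by
    rw [← Complex.exp_conj]
    congr 1
    simp [Complex.ext_iff]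
  have h3 : (Complex.exp ((x:ℂ) - y * Complex.I))⁻¹ = Complex.exp (-(x:ℂ) + y * Complex.I) := by
    rw [← Complex.exp_neg]
    congr 1
    ring
  have h4 : Complex.exp (-(x:ℂ) + y * Complex.I) = (Real.exp (-x) : ℂ) * ee (y / (2*π)) := by
    rw [Complex.exp_add, ee]
    have hπc : (π:ℂ) ≠ 0 := by exact_mod_cast Real.pi_ne_zero
    congr 1
    · rw [show (-(x:ℂ)) = ((-x : ℝ) : ℂ) by push_cast; ring, ← Complex.ofReal_exp]
    · congr 1
      push_cast
      field_simp
  rw [h1, h2, h3, h4]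
  congr 1
  rw [Real.exp_neg, inv_pow]


lemma rho_mem {x : ℝ} (hx : 0 < x) : Real.exp (-x) ∈ Set.Ioo (0:ℝ) 1 :=
  ⟨Real.exp_pos _, Real.exp_lt_one_iff.mpr (by linarith)⟩

lemma gg_eq (x y : ℝ) :
    gg f x y = (1 - Real.exp (-x)^2) * y
      + 2*π*(Real.exp (-x))^2 * (y/(2*π) + (UU f ((Real.exp (-x) : ℂ) * ee (y / (2*π)))).re) := by
  rw [gg, VV_exp]
  have hπ : (π:ℝ) ≠ 0 := Real.pi_ne_zero
  field_simp
  ring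

lemma gg_gap (hf : Continuous f) (hmono : StrictMono f) (hper : ∀ x : ℝ, f (x + 1) = f x + 1)
    {x : ℝ} (hx : 0 < x) {y₁ y₂ : ℝ} (h : y₁ ≤ y₂) :
    (1 - Real.exp (-x)^2) * (y₂ - y₁) ≤ gg f x y₂ - gg f x y₁ := by
  have hρ := rho_mem hx
  have h2π : (0:ℝ) < 2*π := by positivity
  have hθ : y₁/(2*π) ≤ y₂/(2*π) := by gcongr
  have hG : y₁/(2*π) + (UU f (((Real.exp (-x)):ℂ) * ee (y₁/(2*π)))).re
      ≤ y₂/(2*π) + (UU f (((Real.exp (-x)):ℂ) * ee (y₂/(2*π)))).re :=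
    G_mono f hf hmono hper hρ hθ
  have hmul := mul_le_mul_of_nonneg_left hG
    (by positivity : (0:ℝ) ≤ 2*π*(Real.exp (-x))^2)
  rw [gg_eq, gg_eq]
  linarith [hmul]

lemma gg_strictMono (hf : Continuous f) (hmono : StrictMono f)
    (hper : ∀ x : ℝ, f (x + 1) = f x + 1) {x : ℝ} (hx : 0 < x) :
    StrictMono (gg f x) := by
  intro y₁ y₂ h
  have hgap := gg_gap f hf hmono hper hx h.le
  have hρ := rho_mem hx
  have h1 : (0:ℝ) < 1 - Real.exp (-x)^2 := by nlinarith [hρ.1, hρ.2]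
  nlinarith [mul_pos h1 (sub_pos.mpr h)]

lemma gg_int (x : ℝ) (n : ℤ) (y : ℝ) : gg f x (y + 2*π*n) = gg f x y + 2*π*n := by
  rw [gg, gg]
  have heq : ((x:ℂ) + ((y + 2*π*n : ℝ) : ℂ) * Complex.I)
      = ((x:ℂ) + (y:ℝ) * Complex.I) + n*(2*π*Complex.I) := by push_cast; ring
  rw [heq, Complex.exp_add, Complex.exp_int_mul_two_pi_mul_I, mul_one]
  ring

lemma gg_cont (hf : Continuous f) {x : ℝ} (hx : 0 < x) : Continuous (gg f x) := by
  have hρ := rho_mem hx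
  have h : gg f x = fun y => (1 - Real.exp (-x)^2) * y
      + 2*π*(Real.exp (-x))^2 * (y/(2*π)
        + (UU f (((Real.exp (-x)):ℂ) * ee (y / (2*π)))).re) := funext (gg_eq f x)
  rw [h]
  apply Continuous.add (continuous_const.mul continuous_id)
  apply Continuous.mul continuous_const
  apply Continuous.add (continuous_id.div_const _)
  apply Complex.continuous_re.comp
  rw [continuous_iff_continuousAt]; intro y
  have h1 : ContinuousAt (fun y : ℝ => ((Real.exp (-x)):ℂ) * ee (y/(2*π))) y :=
    (continuous_const.mul (ee_cont.comp (continuous_id.div_const _))).continuousAt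
  exact ContinuousAt.comp (g := UU f)
    (f := fun y : ℝ => ((Real.exp (-x)):ℂ) * ee (y/(2*π)))
    (UU_contAt f hf (abs_rho_ee hρ (y/(2*π)))) h1

lemma gg_surj (hf : Continuous f) (hmono : StrictMono f)
    (hper : ∀ x : ℝ, f (x + 1) = f x + 1) {x : ℝ} (hx : 0 < x) :
    Function.Surjective (gg f x) := by
  intro v
  obtain ⟨n, hn⟩ := exists_nat_ge (|v - gg f x 0| / (2*π))
  have h2π : (0:ℝ) < 2*π := by positivity
  have hn' : |v - gg f x 0| ≤ 2*π*n := by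
    rw [div_le_iff₀ h2π] at hn; linarith
  have ha : gg f x (0 + 2*π*((-(n:ℤ) : ℤ) : ℝ)) = gg f x 0 + 2*π*((-(n:ℤ) : ℤ) : ℝ) :=
    gg_int f x (-(n:ℤ)) 0
  have hb : gg f x (0 + 2*π*(((n:ℤ) : ℤ) : ℝ)) = gg f x 0 + 2*π*(((n:ℤ) : ℤ) : ℝ) :=
    gg_int f x (n:ℤ) 0
  have habs := abs_le.mp hn'
  have hmem : v ∈ Set.Icc (gg f x (0 + 2*π*((-(n:ℤ) : ℤ) : ℝ))) (gg f x (0 + 2*π*(((n:ℤ):ℤ) : ℝ))) := by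
    rw [ha, hb]
    constructor
    · push_cast; linarith [habs.1]
    · push_cast; linarith [habs.2]
  have hle : (0:ℝ) + 2*π*((-(n:ℤ) : ℤ) : ℝ) ≤ 0 + 2*π*(((n:ℤ):ℤ) : ℝ) := by
    push_cast
    nlinarith [Nat.cast_nonneg (α := ℝ) n]
  obtain ⟨y, _, hy⟩ := intermediate_value_Icc hle (gg_cont f hf hx).continuousOn hmem
  exact ⟨y, hy⟩


lemma Psi_exp (ζ : ℂ) : Psi f (Complex.exp ζ) = Complex.exp (BB f ζ) := by
  rw [Psi, BB, Complex.exp_add]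

lemma abs_Psi (z : ℂ) : Complex.abs (Psi f z) = Complex.abs z := by
  rw [Psi, map_mul, Complex.abs_exp]
  have h : (2*π*Complex.I*(VV f z : ℂ)).re = 0 := by simp
  rw [h, Real.exp_zero, mul_one]

lemma BB_re (ζ : ℂ) : (BB f ζ).re = ζ.re := by rw [BB]; simp

lemma BB_im (ζ : ℂ) : (BB f ζ).im = gg f ζ.re ζ.im := by
  rw [BB, gg, Complex.re_add_im]
  simp

lemma Psi_inj (hf : Continuous f) (hmono : StrictMono f) (hper : ∀ x : ℝ, f (x + 1) = f x + 1)
    {z₁ z₂ : ℂ} (h₁ : 1 < Complex.abs z₁) (h₂ : 1 < Complex.abs z₂)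
    (heq : Psi f z₁ = Psi f z₂) : z₁ = z₂ := by
  have hz₁ : z₁ ≠ 0 := by intro hc; rw [hc] at h₁; simp at h₁; linarith
  have hz₂ : z₂ ≠ 0 := by intro hc; rw [hc] at h₂; simp at h₂; linarith
  have hexp₁ : Complex.exp (Complex.log z₁) = z₁ := Complex.exp_log hz₁
  have hexp₂ : Complex.exp (Complex.log z₂) = z₂ := Complex.exp_log hz₂
  have heq' : Complex.exp (BB f (Complex.log z₁)) = Complex.exp (BB f (Complex.log z₂)) := by
    rw [← Psi_exp, ← Psi_exp, hexp₁, hexp₂]; exact heq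
  obtain ⟨n, hn⟩ := Complex.exp_eq_exp_iff_exists_int.mp heq'
  have hre : (Complex.log z₁).re = (Complex.log z₂).re := by
    have := congrArg Complex.re hn
    rw [Complex.add_re, BB_re, BB_re] at this
    simpa using this
  have hxpos : 0 < (Complex.log z₁).re := by rw [Complex.log_re]; exact Real.log_pos h₁
  have him : gg f (Complex.log z₁).re (Complex.log z₁).im
      = gg f (Complex.log z₁).re (Complex.log z₂).im + 2*π*n := by
    have := congrArg Complex.im hn
    rw [Complex.add_im, BB_im, BB_im, ← hre] at this
    rw [this]
    congr 1
    simp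
    ring
  rw [show gg f (Complex.log z₁).re (Complex.log z₂).im + 2*π*n
      = gg f (Complex.log z₁).re ((Complex.log z₂).im + 2*π*n) from
    (gg_int f _ n _).symm] at him
  have himeq : (Complex.log z₁).im = (Complex.log z₂).im + 2*π*n :=
    (gg_strictMono f hf hmono hper hxpos).injective him
  -- n must be 0
  have harg₁ : (Complex.log z₁).im = Complex.arg z₁ := Complex.log_im z₁
  have harg₂ : (Complex.log z₂).im = Complex.arg z₂ := Complex.log_im z₂
  have hb1 : -π < (Complex.log z₁).im := by rw [harg₁]; exact Complex.neg_pi_lt_arg z₁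
  have hb2 : (Complex.log z₁).im ≤ π := by rw [harg₁]; exact Complex.arg_le_pi z₁
  have hb3 : -π < (Complex.log z₂).im := by rw [harg₂]; exact Complex.neg_pi_lt_arg z₂
  have hb4 : (Complex.log z₂).im ≤ π := by rw [harg₂]; exact Complex.arg_le_pi z₂
  have hπ := Real.pi_pos
  have hn1 : (n:ℝ) < 1 := by nlinarith
  have hn2 : (-1:ℝ) < n := by nlinarith
  have hn0 : n = 0 := by
    have ha : (-1:ℤ) < n := by exact_mod_cast hn2
    have hb : n < (1:ℤ) := by exact_mod_cast hn1
    omega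
  rw [hn0] at himeq
  simp at himeq
  have hlogeq : Complex.log z₁ = Complex.log z₂ := Complex.ext hre himeq
  rw [← hexp₁, ← hexp₂, hlogeq]

lemma Psi_surj (hf : Continuous f) (hmono : StrictMono f) (hper : ∀ x : ℝ, f (x + 1) = f x + 1)
    {w : ℂ} (hw : 1 < Complex.abs w) : ∃ z : ℂ, 1 < Complex.abs z ∧ Psi f z = w := by
  set x := Real.log (Complex.abs w) with hxdef
  have hx : 0 < x := Real.log_pos hw
  obtain ⟨y, hy⟩ := gg_surj f hf hmono hper hx (Complex.arg w)
  refine ⟨Complex.exp (x + y*Complex.I), ?_, ?_⟩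
  · rw [Complex.abs_exp]
    have : ((x:ℂ) + y*Complex.I).re = x := by simp
    rw [this]
    rw [hxdef, Real.exp_log (by positivity : (0:ℝ) < Complex.abs w)] at *
    exact hw
  · rw [Psi_exp]
    have hBB : BB f ((x:ℂ) + y*Complex.I) = (x:ℂ) + (Complex.arg w) * Complex.I := by
      apply Complex.ext
      · rw [BB_re]; simp
      · rw [BB_im]
        simp only [Complex.add_re, Complex.ofReal_re, Complex.mul_re, Complex.I_re,
          Complex.ofReal_im, Complex.I_im, Complex.add_im, Complex.mul_im]
        rw [show x + (y * 0 - 0 * 1) = x by ring, show 0 + (y * 1 + 0 * 0) = y by ring]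
        rw [hy]
        simp
    rw [hBB, Complex.exp_add]
    have : Complex.exp (x:ℂ) = (Complex.abs w : ℂ) := by
      rw [← Complex.ofReal_exp, hxdef, Real.exp_log (by positivity : (0:ℝ) < Complex.abs w)]
    rw [this, Complex.abs_mul_exp_arg_mul_I]


lemma normSq_cdiff : ContDiff ℝ (⊤ : ℕ∞) (Complex.normSq : ℂ → ℝ) := by
  have : (Complex.normSq : ℂ → ℝ) = fun z => z.re*z.re + z.im*z.im := by
    funext z; rw [Complex.normSq_apply]
  rw [this]
  exact (Complex.reCLM.contDiff.mul Complex.reCLM.contDiff).add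
    (Complex.imCLM.contDiff.mul Complex.imCLM.contDiff)

lemma conj_cdiff : ContDiff ℝ (⊤ : ℕ∞) (fun z : ℂ => (starRingEnd ℂ) z) := by
  have : (fun z : ℂ => (starRingEnd ℂ) z) = fun z => Complex.conjCLE z := by
    funext z; simp
  rw [this]
  exact Complex.conjCLE.contDiff

lemma VV_cdiff (hf : Continuous f) {z : ℂ} (hz : 1 < Complex.abs z) :
    ContDiffAt ℝ (⊤ : ℕ∞) (VV f) z := by
  have hz0 : z ≠ 0 := by
    intro hc; rw [hc] at hz; simp at hz; linarith
  have hns : Complex.normSq z ≠ 0 := (Complex.normSq_pos.mpr hz0).ne'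
  have hcne : (starRingEnd ℂ) z ≠ 0 := by simpa using hz0
  have hwball : Complex.abs (((starRingEnd ℂ) z)⁻¹) < 1 := by
    rw [map_inv₀, Complex.abs_conj]
    rw [inv_lt_one₀ (by positivity)]
    exact hz
  have c1 : ContDiffAt ℝ (⊤ : ℕ∞) (fun z : ℂ => (Complex.normSq z)⁻¹) z :=
    (contDiffAt_inv ℝ hns).comp z normSq_cdiff.contDiffAt
  have c2 : ContDiffAt ℝ (⊤ : ℕ∞) (fun z : ℂ => ((starRingEnd ℂ) z)⁻¹) z :=
    (contDiffAt_inv ℝ hcne).comp z conj_cdiff.contDiffAt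
  have c3 : ContDiffAt ℝ (⊤ : ℕ∞) (UU f) (((starRingEnd ℂ) z)⁻¹) := UU_cdiff f hf hwball
  have c4 : ContDiffAt ℝ (⊤ : ℕ∞) (fun z : ℂ => (UU f (((starRingEnd ℂ) z)⁻¹)).re) z :=
    by have := (Complex.reCLM.contDiff.contDiffAt).comp z (c3.comp z c2); exact this
  exact c1.mul c4

lemma Psi_cdiffAt (hf : Continuous f) {z : ℂ} (hz : 1 < Complex.abs z) :
    ContDiffAt ℝ (⊤ : ℕ∞) (Psi f) z := by
  have inner : ContDiffAt ℝ (⊤ : ℕ∞) (fun z : ℂ => ((VV f z : ℝ) : ℂ)) z :=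
    Complex.ofRealCLM.contDiff.contDiffAt.comp z (VV_cdiff f hf hz)
  have e1 : ContDiffAt ℝ (⊤ : ℕ∞) (fun z : ℂ => Complex.exp (2*π*Complex.I * ((VV f z : ℝ) : ℂ))) z :=
    (Complex.contDiff_exp (𝕜 := ℝ)).contDiffAt.comp z (contDiffAt_const.mul inner)
  exact contDiffAt_id.mul e1


lemma det_formula (L : ℂ →ₗ[ℝ] ℂ) :
    LinearMap.det L = (L 1).re * (L Complex.I).im - (L 1).im * (L Complex.I).re := by
  rw [← LinearMap.det_toMatrix Complex.basisOneI, Matrix.det_fin_two]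
  simp [LinearMap.toMatrix_apply]
  ring

def Mexp (ξ : ℂ) : ℂ →L[ℝ] ℂ :=
  ((1 : ℂ →L[ℂ] ℂ).smulRight (Complex.exp ξ)).restrictScalars ℝ

lemma Mexp_hasFDeriv (ξ : ℂ) : HasFDerivAt Complex.exp (Mexp ξ) ξ :=
  ((Complex.hasDerivAt_exp ξ).hasFDerivAt).restrictScalars ℝ

lemma Mexp_apply (ξ v : ℂ) : Mexp ξ v = v * Complex.exp ξ := by
  simp [Mexp, smul_eq_mul]

lemma Mexp_det (ξ : ℂ) :
    LinearMap.det ((Mexp ξ : ℂ →L[ℝ] ℂ) : ℂ →ₗ[ℝ] ℂ) = Complex.normSq (Complex.exp ξ) := by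
  rw [det_formula]
  have e1 : ((Mexp ξ : ℂ →L[ℝ] ℂ) : ℂ →ₗ[ℝ] ℂ) 1 = Complex.exp ξ := by
    simp [Mexp_apply]
  have e2 : ((Mexp ξ : ℂ →L[ℝ] ℂ) : ℂ →ₗ[ℝ] ℂ) Complex.I = Complex.I * Complex.exp ξ := by
    simp [Mexp_apply]
  rw [e1, e2]
  simp [Complex.mul_re, Complex.mul_im, Complex.normSq_apply]

lemma aux_re (t : ℝ) : ((2*π*Complex.I) * (t:ℂ)).re = 0 := by
  simp [Complex.mul_re]

lemma aux_im (t : ℝ) : ((2*π*Complex.I) * (t:ℂ)).im = 2*π*t := by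
  simp [Complex.mul_im]

lemma fderiv_Psi_det_pos (hf : Continuous f) (hmono : StrictMono f)
    (hper : ∀ x : ℝ, f (x + 1) = f x + 1) {z : ℂ} (hz : 1 < Complex.abs z) :
    0 < LinearMap.det ((fderiv ℝ (Psi f) z : ℂ →L[ℝ] ℂ) : ℂ →ₗ[ℝ] ℂ) := by
  have hz0 : z ≠ 0 := by intro hc; rw [hc] at hz; simp at hz; linarith
  have hexpz : Complex.exp (Complex.log z) = z := Complex.exp_log hz0
  set ζ := Complex.log z with hζ
  have hζre : 0 < ζ.re := by rw [hζ, Complex.log_re]; exact Real.log_pos hz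
  have hVc := VV_cdiff f hf hz
  have hexpcd : ContDiff ℝ (⊤ : ℕ∞) Complex.exp := Complex.contDiff_exp (𝕜 := ℝ)
  have hWd : DifferentiableAt ℝ (fun ξ : ℂ => VV f (Complex.exp ξ)) ζ := by
    have h1 : DifferentiableAt ℝ (VV f) (Complex.exp ζ) := by
      rw [hexpz]; exact hVc.differentiableAt (by simp)
    exact h1.comp ζ ((hexpcd.differentiable (by simp)).differentiableAt)
  set LW := fderiv ℝ (fun ξ : ℂ => VV f (Complex.exp ξ)) ζ with hLWdef
  have hW : HasFDerivAt (fun ξ : ℂ => VV f (Complex.exp ξ)) LW ζ := hWd.hasFDerivAt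
  set LB := ContinuousLinearMap.id ℝ ℂ + (2*π*Complex.I) • (Complex.ofRealCLM.comp LW) with hLBdef
  have h1 : HasFDerivAt (fun ξ : ℂ => ((VV f (Complex.exp ξ) : ℝ) : ℂ))
      (Complex.ofRealCLM.comp LW) ζ := Complex.ofRealCLM.hasFDerivAt.comp ζ hW
  have h2 : HasFDerivAt (fun ξ : ℂ => (2*π*Complex.I) * ((VV f (Complex.exp ξ) : ℝ) : ℂ))
      ((2*π*Complex.I) • (Complex.ofRealCLM.comp LW)) ζ := h1.const_mul _
  have hBd : HasFDerivAt (BB f) LB ζ := by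
    have h3 := (hasFDerivAt_id ζ).add h2
    rw [hLBdef]
    exact h3
  have hPsiD : HasFDerivAt (Psi f) (fderiv ℝ (Psi f) z) (Complex.exp ζ) := by
    rw [hexpz]
    exact ((Psi_cdiffAt f hf hz).differentiableAt (by simp)).hasFDerivAt
  have hc1 : HasFDerivAt (fun ξ : ℂ => Psi f (Complex.exp ξ))
      ((fderiv ℝ (Psi f) z).comp (Mexp ζ)) ζ := hPsiD.comp ζ (Mexp_hasFDeriv ζ)
  have hc2 : HasFDerivAt (fun ξ : ℂ => Complex.exp (BB f ξ))
      ((Mexp (BB f ζ)).comp LB) ζ := (Mexp_hasFDeriv (BB f ζ)).comp ζ hBd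
  have hfun : (fun ξ : ℂ => Psi f (Complex.exp ξ)) = fun ξ : ℂ => Complex.exp (BB f ξ) :=
    funext (Psi_exp f)
  rw [hfun] at hc1
  have hEq := hc1.unique hc2
  have hdet := congrArg (fun (L : ℂ →L[ℝ] ℂ) => LinearMap.det (L : ℂ →ₗ[ℝ] ℂ)) hEq
  simp only [ContinuousLinearMap.toLinearMap_comp] at hdet
  rw [LinearMap.det_comp, LinearMap.det_comp] at hdet
  rw [Mexp_det, Mexp_det] at hdet
  -- compute det LB
  have hLB1 : ((LB : ℂ →L[ℝ] ℂ) : ℂ →ₗ[ℝ] ℂ) 1 = 1 + (2*π*Complex.I) * ((LW 1 : ℝ) : ℂ) := by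
    simp [hLBdef, smul_eq_mul]
  have hLBI : ((LB : ℂ →L[ℝ] ℂ) : ℂ →ₗ[ℝ] ℂ) Complex.I
      = Complex.I + (2*π*Complex.I) * ((LW Complex.I : ℝ) : ℂ) := by
    simp [hLBdef, smul_eq_mul]
  have hdetLB : LinearMap.det ((LB : ℂ →L[ℝ] ℂ) : ℂ →ₗ[ℝ] ℂ) = 1 + 2*π*(LW Complex.I) := by
    rw [det_formula, hLB1, hLBI]
    simp [Complex.add_re, Complex.add_im, aux_re, aux_im]
  rw [hdetLB] at hdet
  -- positivity of 1 + 2π LW I via gg slope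
  have hline : HasDerivAt (fun y : ℝ => ((ζ.re : ℂ) + (y:ℂ) * Complex.I)) Complex.I ζ.im := by
    have h0 : HasDerivAt (fun y : ℝ => ((y:ℝ):ℂ)) 1 ζ.im := by
      simpa using (hasDerivAt_id ζ.im).ofReal_comp
    have hmul := h0.mul_const Complex.I
    have := hmul.const_add ((ζ.re : ℂ))
    simpa using this
  have hWl : HasDerivAt (fun y : ℝ => VV f (Complex.exp ((ζ.re:ℂ) + (y:ℂ)*Complex.I)))
      (LW Complex.I) ζ.im := by
    have h4 : HasFDerivAt (fun ξ : ℂ => VV f (Complex.exp ξ)) LW ((ζ.re:ℂ) + (ζ.im:ℂ)*Complex.I) := by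
      rw [Complex.re_add_im]
      exact hW
    have := h4.comp_hasDerivAt ζ.im hline
    exact this
  have hgd : HasDerivAt (gg f ζ.re) (1 + 2*π*(LW Complex.I)) ζ.im := by
    have h5 := (hasDerivAt_id ζ.im).add (hWl.const_mul (2*π))
    exact (show HasDerivAt
      (fun y : ℝ => y + 2*π * VV f (Complex.exp ((ζ.re:ℂ) + (y:ℂ)*Complex.I)))
      (1 + 2*π*(LW Complex.I)) ζ.im by exact h5)
  have hcpos : 0 < 1 - Real.exp (-ζ.re)^2 := by
    have hρ := rho_mem hζre
    nlinarith [hρ.1, hρ.2]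
  have hslope : ∀ᶠ y in nhdsWithin ζ.im {ζ.im}ᶜ,
      1 - Real.exp (-ζ.re)^2 ≤ slope (gg f ζ.re) ζ.im y := by
    filter_upwards [self_mem_nhdsWithin] with y hy
    have hne : y ≠ ζ.im := hy
    rcases lt_or_gt_of_ne hne with hlt | hgt
    · have hgap := gg_gap f hf hmono hper hζre (le_of_lt hlt)
      rw [slope_comm, slope_def_field, le_div_iff₀ (by linarith)]
      nlinarith
    · have hgap := gg_gap f hf hmono hper hζre (le_of_lt hgt)
      rw [slope_def_field, le_div_iff₀ (by linarith)]
      nlinarith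
  have hDge : 1 - Real.exp (-ζ.re)^2 ≤ 1 + 2*π*(LW Complex.I) :=
    ge_of_tendsto (hasDerivAt_iff_tendsto_slope.mp hgd) hslope
  have hDpos : 0 < 1 + 2*π*(LW Complex.I) := lt_of_lt_of_le hcpos hDge
  -- conclude
  have hN2 : Complex.normSq (Complex.exp (BB f ζ)) = Complex.normSq z := by
    rw [← Psi_exp, hexpz, Complex.normSq_eq_abs, Complex.normSq_eq_abs, abs_Psi]
  have hN1 : Complex.normSq (Complex.exp ζ) = Complex.normSq z := by rw [hexpz]
  rw [hN1, hN2] at hdet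
  have hNpos : 0 < Complex.normSq z := Complex.normSq_pos.mpr hz0
  have hfinal : LinearMap.det ((fderiv ℝ (Psi f) z : ℂ →L[ℝ] ℂ) : ℂ →ₗ[ℝ] ℂ)
      = 1 + 2*π*(LW Complex.I) := by
    have := hdet
    field_simp at this
    exact mul_right_cancel₀ hNpos.ne' (by linarith [this])
  rw [hfinal]
  exact hDpos


set_option maxHeartbeats 1000000 in
lemma poisson_tendsto (hf : Continuous f) (hper : ∀ x : ℝ, f (x + 1) = f x + 1) (x : ℝ) :
    Tendsto (fun w => (UU f w).re)
      (nhdsWithin (ee x) {w : ℂ | Complex.abs w < 1}) (nhds (pp f x)) := by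
  rw [Metric.tendsto_nhdsWithin_nhds]
  intro ε hε
  obtain ⟨M, hM⟩ : ∃ M, ∀ t ∈ Set.Icc (x-1) (x+1), ‖pp f t‖ ≤ M :=
    isCompact_Icc.exists_bound_of_continuousOn (pp_cont f hf).continuousOn
  have hM0 : 0 ≤ M := le_trans (norm_nonneg _) (hM x (by constructor <;> linarith))
  obtain ⟨δ₁, hδ₁pos, hδ₁⟩ :=
    Metric.continuousAt_iff.mp ((pp_cont f hf).continuousAt (x := x)) (ε/4) (by positivity)
  set d := min (δ₁/2) (4⁻¹ : ℝ) with hd_def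
  have hdpos : 0 < d := lt_min (by positivity) (by norm_num)
  have hd14 : d ≤ 4⁻¹ := min_le_right _ _
  have hdδ : d < δ₁ := lt_of_le_of_lt (min_le_left _ _) (by linarith)
  set K := Set.Icc (x - 1/2) (x + 1/2) ∩ {t : ℝ | d ≤ |t - x|} with hK_def
  have hKcomp : IsCompact K :=
    isCompact_Icc.inter_right (isClosed_Ici.preimage ((continuous_id.sub continuous_const).abs))
  have hKne : K.Nonempty := by
    refine ⟨x + 4⁻¹, ⟨by constructor <;> [linarith; linarith], ?_⟩⟩
    simp only [Set.mem_setOf_eq]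
    rw [show x + 4⁻¹ - x = (4⁻¹:ℝ) by ring, abs_of_pos (by norm_num : (0:ℝ) < 4⁻¹)]
    exact hd14
  have hcontK : ContinuousOn (fun t => Complex.abs (ee t - ee x)) K :=
    (Complex.continuous_abs.comp (ee_cont.sub continuous_const)).continuousOn
  obtain ⟨t₀, ht₀K, ht₀min⟩ := hKcomp.exists_isMinOn hKne hcontK
  set c₁ := Complex.abs (ee t₀ - ee x) with hc₁def
  have hc₁pos : 0 < c₁ := by
    rw [hc₁def]
    rw [AbsoluteValue.pos_iff]
    intro hcon
    rw [sub_eq_zero] at hcon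
    -- ee t₀ = ee x implies t₀ - x ∈ ℤ
    have h1 : ee x * ee (t₀ - x) = ee x := by
      rw [← ee_add, show x + (t₀ - x) = t₀ by ring, hcon]
    have h2 : ee (t₀ - x) = 1 := by
      have := mul_left_cancel₀ (ee_ne_zero x) (h1.trans (mul_one (ee x)).symm)
      exact this
    rw [ee, Complex.exp_eq_one_iff] at h2
    obtain ⟨n, hn⟩ := h2
    have h2πI : (2*(π:ℂ)*Complex.I) ≠ 0 := by
      simp only [ne_eq, mul_eq_zero, not_or]
      refine ⟨⟨by norm_num, ?_⟩, Complex.I_ne_zero⟩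
      exact_mod_cast Real.pi_ne_zero
    have h3 : ((t₀ - x : ℝ) : ℂ) = (n : ℂ) := by
      apply mul_left_cancel₀ h2πI
      rw [hn]; ring
    have h4 : t₀ - x = (n : ℝ) := by exact_mod_cast h3
    have h5 : d ≤ |t₀ - x| := ht₀K.2
    have h6 : |t₀ - x| ≤ 1/2 := by
      have := ht₀K.1
      rw [Set.mem_Icc] at this
      rw [abs_le]; constructor <;> linarith [this.1, this.2]
    have hn0 : n ≠ 0 := by
      intro hc; rw [hc] at h4; simp at h4; rw [h4] at h5; simp at h5; linarith
    have : (1:ℝ) ≤ |t₀ - x| := by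
      rw [h4, ← Int.cast_abs]
      exact_mod_cast Int.one_le_abs hn0
    linarith
  set δ := min (c₁/2) (ε * c₁^2/(64*(M+1))) with hδdef
  have hδpos : 0 < δ := lt_min (by positivity) (by positivity)
  refine ⟨δ, hδpos, ?_⟩
  intro w hwS hwdist
  rw [Set.mem_setOf_eq] at hwS
  rw [Complex.dist_eq] at hwdist
  -- key pointwise kernel bound on the far set
  have hfar : ∀ t : ℝ, t ∈ Set.Icc (x - 1/2) (x + 1/2) → d ≤ |t - x| →
      PP w t ≤ 8*δ/c₁^2 := by
    intro t htIcc htd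
    have htK : t ∈ K := ⟨htIcc, htd⟩
    have hmin : c₁ ≤ Complex.abs (ee t - ee x) := ht₀min htK
    have htri : Complex.abs (ee t - ee x) - Complex.abs (ee x - w) ≤ Complex.abs (ee t - w) := by
      have := Complex.abs.le_sub (ee t - ee x) (w - ee x)
      calc Complex.abs (ee t - ee x) - Complex.abs (ee x - w)
          = Complex.abs (ee t - ee x) - Complex.abs (w - ee x) := by
            rw [← Complex.abs.map_neg (w - ee x), neg_sub]
        _ ≤ Complex.abs ((ee t - ee x) - (w - ee x)) := Complex.abs.le_sub _ _
        _ = Complex.abs (ee t - w) := by ring_nf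
    have habsw : Complex.abs (ee x - w) < δ := by
      rw [← Complex.abs.map_neg, neg_sub]; exact hwdist
    have hδc : δ ≤ c₁/2 := min_le_left _ _
    have hlow : c₁/2 ≤ Complex.abs (ee t - w) := by linarith
    have hnum : 1 - Complex.normSq w ≤ 2*δ := by
      have h1 : Complex.abs w ≤ 1 := le_of_lt hwS
      have h2 : 1 - Complex.abs w ≤ Complex.abs (ee x - w) := by
        have h3 := Complex.abs.le_sub (ee x) w
        rw [abs_ee] at h3
        linarith
      have h4 : Complex.normSq w = Complex.abs w ^ 2 := (Complex.sq_abs w).symm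
      nlinarith [Complex.abs.nonneg w]
    have hden : (c₁/2)^2 ≤ Complex.normSq (ee t - w) := by
      rw [← Complex.sq_abs]
      apply pow_le_pow_left₀ (by positivity) hlow
    rw [PP]
    calc (1 - Complex.normSq w) / Complex.normSq (ee t - w)
        ≤ (2*δ) / ((c₁/2)^2) := by
          apply div_le_div₀ (by positivity) hnum (by positivity) hden
      _ = 8*δ/c₁^2 := by field_simp; ring
  -- periodic shift of the two integrals
  have hperiodicP : Function.Periodic (fun t => pp f t * PP w t) 1 := by
    intro t; simp only; rw [pp_per f hper, PP_per]
  have hperiodicQ : Function.Periodic (PP w) 1 := fun t => PP_per w t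
  have hshiftP : ∫ t in (x - 1/2)..(x + 1/2), pp f t * PP w t
      = ∫ t in (0:ℝ)..1, pp f t * PP w t := by
    have := hperiodicP.intervalIntegral_add_eq (x - 1/2) 0
    rw [show x - 1/2 + 1 = x + 1/2 by ring, zero_add] at this
    exact this
  have hshiftQ : ∫ t in (x - 1/2)..(x + 1/2), PP w t = 1 := by
    have := hperiodicQ.intervalIntegral_add_eq (x - 1/2) 0
    rw [show x - 1/2 + 1 = x + 1/2 by ring, zero_add] at this
    rw [this]
    exact PP_mass hwS
  have hintPP : Continuous (PP w) := PPcont hwS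
  have hintp : Continuous (fun t => pp f t * PP w t) := (pp_cont f hf).mul hintPP
  -- difference as a single integral
  have hre : (UU f w).re = ∫ t in (x - 1/2)..(x + 1/2), pp f t * PP w t := by
    rw [UU_re f hf hwS, ← hshiftP]
  have hconst : pp f x = ∫ t in (x - 1/2)..(x + 1/2), pp f x * PP w t := by
    rw [intervalIntegral.integral_const_mul, hshiftQ, mul_one]
  have hdiff : (UU f w).re - pp f x
      = ∫ t in (x - 1/2)..(x + 1/2), (pp f t - pp f x) * PP w t := by
    have h7 : ∫ t in (x - 1/2)..(x + 1/2), (pp f t - pp f x) * PP w t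
        = (∫ t in (x - 1/2)..(x + 1/2), pp f t * PP w t)
          - (∫ t in (x - 1/2)..(x + 1/2), pp f x * PP w t) := by
      have hcc : Continuous fun t => pp f x * PP w t := continuous_const.mul hintPP
      rw [← intervalIntegral.integral_sub (hintp.intervalIntegrable _ _)
        (hcc.intervalIntegrable _ _)]
      congr 1; funext t; ring
    rw [h7, ← hre, ← hconst]
  -- pointwise bound
  have hbound : ∀ t ∈ Set.Icc (x - 1/2) (x + 1/2),
      |(pp f t - pp f x) * PP w t| ≤ (ε/4) * PP w t + 2*(M+1)*(8*δ/c₁^2) := by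
    intro t htIcc
    have hPpos := PP_pos hwS t
    rw [abs_mul, abs_of_pos hPpos]
    rcases lt_or_ge (|t - x|) d with hnear | hfar'
    · have h1 : dist t x < δ₁ := by rw [Real.dist_eq]; linarith
      have h2 : |pp f t - pp f x| ≤ ε/4 := by
        have := hδ₁ h1
        rw [Real.dist_eq] at this
        linarith
      have h3 : (0:ℝ) ≤ 2*(M+1)*(8*δ/c₁^2) := by positivity
      nlinarith
    · have h1 : |pp f t - pp f x| ≤ 2*(M+1) := by
        rw [Set.mem_Icc] at htIcc
        have ht1 : t ∈ Set.Icc (x-1) (x+1) := by constructor <;> linarith [htIcc.1, htIcc.2]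
        have h2 := hM t ht1
        have h3 := hM x (by constructor <;> linarith)
        rw [Real.norm_eq_abs] at h2 h3
        calc |pp f t - pp f x| ≤ |pp f t| + |pp f x| := abs_sub _ _
          _ ≤ 2*(M+1) := by linarith
      have h2 := hfar t htIcc hfar'
      have h4 : (0:ℝ) ≤ ε/4 * PP w t := by positivity
      nlinarith [hPpos, hδpos, hc₁pos]
  -- put it together
  rw [Real.dist_eq, hdiff]
  have hab : (x - 1/2 : ℝ) ≤ x + 1/2 := by linarith
  calc |∫ t in (x - 1/2)..(x + 1/2), (pp f t - pp f x) * PP w t|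
      ≤ ∫ t in (x - 1/2)..(x + 1/2), |(pp f t - pp f x) * PP w t| :=
        intervalIntegral.abs_integral_le_integral_abs hab
    _ ≤ ∫ t in (x - 1/2)..(x + 1/2), ((ε/4) * PP w t + 2*(M+1)*(8*δ/c₁^2)) := by
        apply intervalIntegral.integral_mono_on hab
        · exact (((pp_cont f hf).sub continuous_const).mul hintPP).abs.intervalIntegrable _ _
        · exact ((continuous_const.mul hintPP).add continuous_const).intervalIntegrable _ _
        · exact hbound
    _ = (ε/4) * 1 + 2*(M+1)*(8*δ/c₁^2) * 1 := by
        have hcc : Continuous fun t => ε/4 * PP w t := continuous_const.mul hintPP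
        rw [intervalIntegral.integral_add (hcc.intervalIntegrable _ _)
          (intervalIntegrable_const), intervalIntegral.integral_const_mul, hshiftQ]
        rw [intervalIntegral.integral_const, smul_eq_mul]
        ring_nf
    _ < ε := by
        have hδ2 : δ ≤ ε * c₁^2/(64*(M+1)) := min_le_right _ _
        have h6 : δ * (64*(M+1)) ≤ ε * c₁^2 := (le_div_iff₀ (by positivity)).mp hδ2
        have h7 : 2*(M+1)*(8*δ/c₁^2) ≤ ε/4 := by
          have h8 : 2*(M+1)*(8*δ/c₁^2) = 16*(M+1)*δ/c₁^2 := by ring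
          rw [h8, div_le_iff₀ (by positivity : (0:ℝ) < c₁^2)]
          nlinarith
        linarith


lemma conj_ee_inv (x : ℝ) : ((starRingEnd ℂ) (ee x))⁻¹ = ee x := by
  have h1 : (starRingEnd ℂ) (ee x) = Complex.exp (-(2*π*Complex.I*(x:ℂ))) := by
    rw [ee, ← Complex.exp_conj]
    congr 1
    apply Complex.ext <;> simp
  rw [h1, ← Complex.exp_neg, neg_neg, ee]

lemma Psi_tendsto (hf : Continuous f) (hper : ∀ x : ℝ, f (x + 1) = f x + 1) (x : ℝ) :
    Tendsto (Psi f) (nhdsWithin (ee x) {z : ℂ | 1 < Complex.abs z}) (nhds (ee (f x))) := by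
  have heene : ee x ≠ 0 := ee_ne_zero x
  have hconjne : (starRingEnd ℂ) (ee x) ≠ 0 := by simpa using heene
  -- the map y ↦ (conj y)⁻¹ tends to ee x within the ball
  have hcont1 : ContinuousAt (fun y : ℂ => ((starRingEnd ℂ) y)⁻¹) (ee x) := by
    apply ContinuousAt.inv₀ (Complex.continuous_conj.continuousAt) hconjne
  have ht1 : Tendsto (fun y : ℂ => ((starRingEnd ℂ) y)⁻¹)
      (nhdsWithin (ee x) {z : ℂ | 1 < Complex.abs z})
      (nhdsWithin (ee x) {w : ℂ | Complex.abs w < 1}) := by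
    apply tendsto_nhdsWithin_of_tendsto_nhds_of_eventually_within
    · have := hcont1.tendsto
      rw [conj_ee_inv] at this
      exact this.mono_left nhdsWithin_le_nhds
    · filter_upwards [self_mem_nhdsWithin] with y hy
      show Complex.abs (((starRingEnd ℂ) y)⁻¹) < 1
      rw [map_inv₀, Complex.abs_conj]
      rw [inv_lt_one₀ (by positivity)]
      exact hy
  have h2 : Tendsto (fun y : ℂ => (UU f (((starRingEnd ℂ) y)⁻¹)).re)
      (nhdsWithin (ee x) {z : ℂ | 1 < Complex.abs z}) (nhds (pp f x)) :=
    (poisson_tendsto f hf hper x).comp ht1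
  have h3 : Tendsto (fun y : ℂ => (Complex.normSq y)⁻¹)
      (nhdsWithin (ee x) {z : ℂ | 1 < Complex.abs z}) (nhds 1) := by
    have hcont : ContinuousAt (fun y : ℂ => (Complex.normSq y)⁻¹) (ee x) :=
      ContinuousAt.inv₀ (Complex.continuous_normSq.continuousAt) (by
        rw [normSq_ee]; norm_num)
    have := hcont.tendsto.mono_left (nhdsWithin_le_nhds
      (s := {z : ℂ | 1 < Complex.abs z}))
    rw [normSq_ee] at this
    simpa using this
  have h4 : Tendsto (fun y : ℂ => VV f y)
      (nhdsWithin (ee x) {z : ℂ | 1 < Complex.abs z}) (nhds (pp f x)) := by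
    have := h3.mul h2
    rw [one_mul] at this
    exact this
  have h5 : Tendsto (fun y : ℂ => Complex.exp (2*π*Complex.I * ((VV f y : ℝ) : ℂ)))
      (nhdsWithin (ee x) {z : ℂ | 1 < Complex.abs z})
      (nhds (Complex.exp (2*π*Complex.I * ((pp f x : ℝ) : ℂ)))) := by
    apply (Complex.continuous_exp.continuousAt).tendsto.comp
    apply Filter.Tendsto.const_mul
    exact Complex.continuous_ofReal.continuousAt.tendsto.comp h4
  have h6 : Tendsto (fun y : ℂ => y)
      (nhdsWithin (ee x) {z : ℂ | 1 < Complex.abs z}) (nhds (ee x)) :=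
    tendsto_id.mono_left nhdsWithin_le_nhds
  have h7 := h6.mul h5
  have hval : ee x * Complex.exp (2*π*Complex.I * ((pp f x : ℝ) : ℂ)) = ee (f x) := by
    rw [show Complex.exp (2*π*Complex.I * ((pp f x : ℝ) : ℂ)) = ee (pp f x) from rfl]
    rw [← ee_add]
    congr 1
    rw [pp]; ring
  rw [hval] at h7
  exact h7

open Classical in
def Phi : ℂ → ℂ := fun w =>
  if h : ∃ z : ℂ, 1 < Complex.abs z ∧ Psi f z = w then h.choose else w

lemma Phi_spec (hf : Continuous f) (hmono : StrictMono f)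
    (hper : ∀ x : ℝ, f (x + 1) = f x + 1) {w : ℂ} (hw : 1 < Complex.abs w) :
    1 < Complex.abs (Phi f w) ∧ Psi f (Phi f w) = w := by
  rw [Phi]
  have hex := Psi_surj f hf hmono hper hw
  rw [dif_pos hex]
  exact hex.choose_spec

lemma Phi_Psi (hf : Continuous f) (hmono : StrictMono f)
    (hper : ∀ x : ℝ, f (x + 1) = f x + 1) {z : ℂ} (hz : 1 < Complex.abs z) :
    Phi f (Psi f z) = z := by
  have hw : 1 < Complex.abs (Psi f z) := by rw [abs_Psi]; exact hz
  have hspec := Phi_spec f hf hmono hper hw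
  exact Psi_inj f hf hmono hper hspec.1 hz hspec.2

lemma Phi_cdiffAt (hf : Continuous f) (hmono : StrictMono f)
    (hper : ∀ x : ℝ, f (x + 1) = f x + 1) {w₀ : ℂ} (hw₀ : 1 < Complex.abs w₀) :
    ContDiffAt ℝ (⊤ : ℕ∞) (Phi f) w₀ := by
  obtain ⟨hz₀, hPz₀⟩ := Phi_spec f hf hmono hper hw₀
  set z₀ := Phi f w₀ with hz₀def
  have hc : ContDiffAt ℝ (⊤ : ℕ∞) (Psi f) z₀ := Psi_cdiffAt f hf hz₀
  have hdet := fderiv_Psi_det_pos f hf hmono hper hz₀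
  set A := fderiv ℝ (Psi f) z₀ with hAdef
  set E : ℂ ≃L[ℝ] ℂ :=
    (LinearMap.equivOfDetNeZero (((A : ℂ →L[ℝ] ℂ)) : ℂ →ₗ[ℝ] ℂ)
      hdet.ne').toContinuousLinearEquiv with hEdef
  have hcoe : ((E : ℂ →L[ℝ] ℂ)) = A := by
    apply ContinuousLinearMap.ext
    intro v
    show E v = A v
    rw [hEdef]
    simp [LinearMap.equivOfDetNeZero]
  have hA : HasFDerivAt (Psi f) A z₀ :=
    ((hc.differentiableAt (by simp)).hasFDerivAt)
  have hA' : HasFDerivAt (Psi f) ((E : ℂ →L[ℝ] ℂ)) z₀ := by rw [hcoe]; exact hA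
  have hn : ((⊤ : ℕ∞) : WithTop ℕ∞) ≠ 0 := by simp
  set g := hc.localInverse hA' hn with hgdef
  have hg : ContDiffAt ℝ (⊤ : ℕ∞) g (Psi f z₀) := hc.to_localInverse hA' hn
  rw [hPz₀] at hg
  have hgval : g w₀ = z₀ := by
    rw [hgdef, ← hPz₀]
    exact hc.localInverse_apply_image hA' hn
  have hs := hc.hasStrictFDerivAt' hA' hn
  have hevr : ∀ᶠ w in nhds w₀, Psi f (g w) = w := by
    have := hs.eventually_right_inverse
    rw [hPz₀] at this
    exact this
  have hevS : ∀ᶠ w in nhds w₀, g w ∈ {z : ℂ | 1 < Complex.abs z} := by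
    apply hg.continuousAt.eventually_mem
    rw [hgval]
    exact (isOpen_lt continuous_const Complex.continuous_abs).mem_nhds hz₀
  have hev : Phi f =ᶠ[nhds w₀] g := by
    filter_upwards [hevr, hevS] with w hw1 hw2
    have hwabs : 1 < Complex.abs w := by
      rw [← hw1, abs_Psi]; exact hw2
    obtain ⟨hP1, hP2⟩ := Phi_spec f hf hmono hper hwabs
    exact Psi_inj f hf hmono hper hP1 hw2 (hP2.trans hw1.symm)
  exact hg.congr_of_eventuallyEq hev

end CHED

end

open Filter Real

/-- Let `φ` be an orientation-preserving homeomorphism of the unit circle, given through its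
lift: a continuous strictly increasing `f : ℝ → ℝ` with `f(x+1) = f(x)+1`, so that `φ` sends
`e^{2πix}` to `e^{2πi f(x)}`.  Then there is an orientation-preserving diffeomorphism `Ψ` of
the exterior `{z : |z| > 1}` of the closed unit disk onto itself such that `Ψ(y) → φ(x)` as
`y → x` for every point `x` of the circle. -/
theorem circle_homeo_extends_to_exterior_diffeo
    (f : ℝ → ℝ) (hf : Continuous f) (hmono : StrictMono f)
    (hper : ∀ x : ℝ, f (x + 1) = f x + 1) :
    ∃ Ψ Φ : ℂ → ℂ,
      Set.MapsTo Ψ {z : ℂ | 1 < ‖z‖} {z : ℂ | 1 < ‖z‖} ∧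
      Set.MapsTo Φ {z : ℂ | 1 < ‖z‖} {z : ℂ | 1 < ‖z‖} ∧
      (∀ z ∈ {z : ℂ | 1 < ‖z‖}, Φ (Ψ z) = z) ∧
      (∀ z ∈ {z : ℂ | 1 < ‖z‖}, Ψ (Φ z) = z) ∧
      ContDiffOn ℝ (⊤ : ℕ∞) Ψ {z : ℂ | 1 < ‖z‖} ∧
      ContDiffOn ℝ (⊤ : ℕ∞) Φ {z : ℂ | 1 < ‖z‖} ∧
      (∀ z ∈ {z : ℂ | 1 < ‖z‖},
        0 < LinearMap.det ((fderiv ℝ Ψ z) : ℂ →ₗ[ℝ] ℂ)) ∧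
      ∀ x : ℝ,
        Tendsto Ψ
          (nhdsWithin (Complex.exp (2 * π * Complex.I * (x : ℂ)))
            {z : ℂ | 1 < ‖z‖})
          (nhds (Complex.exp (2 * π * Complex.I * ((f x : ℝ) : ℂ)))) := by
  refine ⟨CHED.Psi f, CHED.Phi f, ?_, ?_, ?_, ?_, ?_, ?_, ?_, ?_⟩
  · intro z hz
    show 1 < Complex.abs (CHED.Psi f z)
    rw [CHED.abs_Psi]
    exact hz
  · intro w hw
    exact (CHED.Phi_spec f hf hmono hper hw).1
  · intro z hz
    exact CHED.Phi_Psi f hf hmono hper hz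
  · intro w hw
    exact (CHED.Phi_spec f hf hmono hper hw).2
  · intro z hz
    exact (CHED.Psi_cdiffAt f hf hz).contDiffWithinAt
  · intro w hw
    exact (CHED.Phi_cdiffAt f hf hmono hper hw).contDiffWithinAt
  · intro z hz
    exact CHED.fderiv_Psi_det_pos f hf hmono hper hz
  · intro x
    exact CHED.Psi_tendsto f hf hper x
end
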